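/- arXiv:1107.0595 — 7 statements merged into one kernel-verified Lean document; each statement's English description precedes it below -/
import Mathlib

section
/- Let α₁, α₂, α₃ be holomorphic 1-forms on a domain in ℂ² with pairwise wedge products nowhere zero, satisfying α₁ + α₂ + α₃ = 0. Then there exists a unique holomorphic 1-form η such that dα_i = η ∧ α_i for every i ∈ {1,2,3}. -/
open Complex

/-- The partial derivative with respect to the first variable of a function on `ℂ × ℂ`. -/
noncomputable def pdx (f : ℂ × ℂ → ℂ) (p : ℂ × ℂ) : ℂ :=
  deriv (fun z => f (z, p.2)) p.1

/-- The partial derivative with respect to the second variable of a function on `ℂ × ℂ`. -/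
noncomputable def pdy (f : ℂ × ℂ → ℂ) (p : ℂ × ℂ) : ℂ :=
  deriv (fun z => f (p.1, z)) p.2

/-!
Write `αᵢ = aᵢ dx + bᵢ dy` and `η = e dx + f dy`; then `dαᵢ = η ∧ αᵢ` reads
`curl aᵢ bᵢ = e bᵢ - f aᵢ`. For `i = 0, 1` this is a linear system in `(e, f)` whose determinant
is the coefficient of `α₀ ∧ α₁`, so Cramer's rule gives the unique solution, and the equation for
`i = 2` follows by linearity from `α₂ = -α₀ - α₁`. The solution is holomorphic because partial
derivatives of holomorphic functions of two variables are holomorphic: `∂ₓ g` is differentiated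
under the integral sign in the Cauchy formula `∂ₓ g (z, w) = (2πi)⁻¹ ∮ g (ζ, w) / (ζ - z)² dζ`,
which needs only the continuity of `∂_y g`, itself a consequence of the same formula.
-/

open Metric Set MeasureTheory Real Topology

section CircleIntegral

variable {E : Type*} [NormedAddCommGroup E] [NormedSpace ℂ E] {c : ℂ} {R : ℝ}

theorem continuousOn_circleIntegral {X : Type*} [TopologicalSpace X] {f : X → ℂ → E} {s : Set X}
    (hR : 0 ≤ R) (hf : ContinuousOn (Function.uncurry f) (s ×ˢ sphere c R)) :
    ContinuousOn (fun x => ∮ ζ in C(c, R), f x ζ) s := by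
  rw [continuousOn_iff_continuous_domRestrict]
  refine intervalIntegral.continuous_parametric_intervalIntegral_of_continuous'
    (f := fun (x : s) θ => deriv (circleMap c R) θ • f x (circleMap c R θ)) ?_ 0 (2 * π)
  simp only [deriv_circleMap]
  refine ((continuous_circleMap 0 R).mul continuous_const).comp continuous_snd |>.smul ?_
  exact hf.comp_continuous (continuous_subtype_val.comp continuous_fst |>.prodMk
    ((continuous_circleMap c R).comp continuous_snd))
    fun q => ⟨q.1.2, circleMap_mem_sphere c hR q.2⟩

theorem hasFDerivAt_circleIntegral_of_continuousOn [CompleteSpace E] {H : Type*}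
    [NormedAddCommGroup H] [NormedSpace ℂ H] [ProperSpace H] {f : H → ℂ → E}
    {f' : H → ℂ → H →L[ℂ] E} {x₀ : H} {ε : ℝ}
    (hR : 0 ≤ R) (hε : 0 < ε) (hf : ∀ x ∈ ball x₀ ε, ContinuousOn (f x) (sphere c R))
    (hf' : ContinuousOn (Function.uncurry f') (closedBall x₀ ε ×ˢ sphere c R))
    (hderiv : ∀ x ∈ ball x₀ ε, ∀ ζ ∈ sphere c R, HasFDerivAt (f · ζ) (f' x ζ) x) :
    HasFDerivAt (fun x => ∮ ζ in C(c, R), f x ζ) (∮ ζ in C(c, R), f' x₀ ζ) x₀ := by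
  obtain ⟨C, hC⟩ :=
    ((isCompact_closedBall x₀ ε).prod (isCompact_sphere c R)).exists_bound_of_continuousOn hf'
  have hγ : ∀ θ, circleMap c R θ ∈ sphere c R := circleMap_mem_sphere c hR
  have hγ' : Continuous (deriv (circleMap c R)) := by
    rw [funext (deriv_circleMap c R)]
    exact (continuous_circleMap 0 R).mul continuous_const
  have hF : ∀ x ∈ ball x₀ ε,
      Continuous fun θ => deriv (circleMap c R) θ • f x (circleMap c R θ) :=
    fun x hx => hγ'.smul ((hf x hx).comp_continuous (continuous_circleMap c R) hγ)
  refine intervalIntegral.hasFDerivAt_integral_of_dominated_of_fderiv_le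
    (F := fun x θ => deriv (circleMap c R) θ • f x (circleMap c R θ))
    (F' := fun x θ => deriv (circleMap c R) θ • f' x (circleMap c R θ)) (bound := fun _ => R * C)
    (ball_mem_nhds x₀ hε) ?_ ((hF x₀ (mem_ball_self hε)).intervalIntegrable _ _) ?_ ?_
    intervalIntegrable_const ?_
  · filter_upwards [ball_mem_nhds x₀ hε] with x hx
    exact (hF x hx).aestronglyMeasurable
  · exact (hγ'.smul (hf'.comp_continuous (continuous_const.prodMk (continuous_circleMap c R))
      fun θ => ⟨mem_closedBall_self hε.le, hγ θ⟩)).aestronglyMeasurable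
  · refine ae_of_all _ fun θ _ x hx => ?_
    rw [norm_smul, deriv_circleMap, norm_mul, norm_circleMap_zero, norm_I, mul_one,
      abs_of_nonneg hR]
    exact mul_le_mul_of_nonneg_left (hC (x, _) ⟨ball_subset_closedBall hx, hγ θ⟩) hR
  · exact ae_of_all _ fun θ _ x hx => (hderiv x hx _ (hγ θ)).const_smul _

end CircleIntegral

section Partials

variable {U : Set (ℂ × ℂ)} {g : ℂ × ℂ → ℂ}

theorem pdx_eq_circleIntegral (hU : IsOpen U) (hg : DifferentiableOn ℂ g U) {p₀ p : ℂ × ℂ}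
    {R : ℝ} (hRU : closedBall p₀ R ⊆ U) (hp : p ∈ ball p₀ R) :
    pdx g p = (2 * π * I)⁻¹ • ∮ ζ in C(p₀.1, R), ((ζ - p.1) ^ 2)⁻¹ • g (ζ, p.2) := by
  rw [← ball_prod_same] at hp
  rw [← closedBall_prod_same] at hRU
  have hV : IsOpen {z : ℂ | (z, p.2) ∈ U} := hU.preimage (by fun_prop)
  refine (two_pi_I_inv_smul_circleIntegral_sub_sq_inv_smul_of_differentiable hV
    (fun z hz => hRU ⟨hz, ball_subset_closedBall hp.2⟩) ?_ hp.1).symm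
  exact fun z hz => (hg.differentiableAt (hU.mem_nhds hz)).comp z
    (differentiableAt_id.prodMk (differentiableAt_const _)) |>.differentiableWithinAt

theorem mk_mem_closedBall_of_mem_sphere {p₀ p : ℂ × ℂ} {ζ : ℂ} {r R : ℝ}
    (hp : p ∈ closedBall p₀ r) (hζ : ζ ∈ sphere p₀.1 R) (hrR : r ≤ R) :
    (ζ, p.2) ∈ closedBall p₀ R := by
  rw [← closedBall_prod_same] at hp ⊢
  exact ⟨sphere_subset_closedBall hζ, closedBall_subset_closedBall hrR hp.2⟩

theorem sub_fst_ne_zero_of_mem_sphere {p₀ p : ℂ × ℂ} {ζ : ℂ} {r R : ℝ}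
    (hp : p ∈ closedBall p₀ r) (hζ : ζ ∈ sphere p₀.1 R) (hrR : r < R) : ζ - p.1 ≠ 0 := by
  rw [← closedBall_prod_same] at hp
  rintro h
  rw [sub_eq_zero.1 h, mem_sphere] at hζ
  linarith [mem_closedBall.1 hp.1]

theorem mapsTo_closedBall_prod_sphere {p₀ : ℂ × ℂ} {r R : ℝ} (hRU : closedBall p₀ R ⊆ U)
    (hrR : r ≤ R) :
    MapsTo (fun q : (ℂ × ℂ) × ℂ => (q.2, q.1.2)) (closedBall p₀ r ×ˢ sphere p₀.1 R) U :=
  fun _ hq => hRU (mk_mem_closedBall_of_mem_sphere hq.1 hq.2 hrR)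

theorem continuousOn_inv_sub_fst_pow {p₀ : ℂ × ℂ} {r R : ℝ} (hrR : r < R) (n : ℕ) :
    ContinuousOn (fun q : (ℂ × ℂ) × ℂ => ((q.2 - q.1.1) ^ n)⁻¹)
      (closedBall p₀ r ×ˢ sphere p₀.1 R) :=
  (by fun_prop : Continuous fun q : (ℂ × ℂ) × ℂ => (q.2 - q.1.1) ^ n).continuousOn.inv₀
    fun _ hq => pow_ne_zero n (sub_fst_ne_zero_of_mem_sphere hq.1 hq.2 hrR)

theorem continuousOn_cauchyIntegrand (hg : ContinuousOn g U) {p₀ : ℂ × ℂ} {r R : ℝ}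
    (hRU : closedBall p₀ R ⊆ U) (hrR : r < R) :
    ContinuousOn (fun q : (ℂ × ℂ) × ℂ => ((q.2 - q.1.1) ^ 2)⁻¹ • g (q.2, q.1.2))
      (closedBall p₀ r ×ˢ sphere p₀.1 R) :=
  (continuousOn_inv_sub_fst_pow hrR 2).smul
    (hg.comp (by fun_prop) (mapsTo_closedBall_prod_sphere hRU hrR.le))

theorem continuousOn_pdx (hU : IsOpen U) (hg : DifferentiableOn ℂ g U) :
    ContinuousOn (pdx g) U := by
  intro p₀ hp₀
  obtain ⟨R, hR, hRU⟩ := nhds_basis_closedBall.mem_iff.1 (hU.mem_nhds hp₀)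
  have hcont : ContinuousOn
      (fun p => (2 * π * I)⁻¹ • ∮ ζ in C(p₀.1, R), ((ζ - p.1) ^ 2)⁻¹ • g (ζ, p.2))
      (ball p₀ (R / 2)) :=
    (continuousOn_circleIntegral (f := fun (p : ℂ × ℂ) ζ => ((ζ - p.1) ^ 2)⁻¹ • g (ζ, p.2))
      hR.le ((continuousOn_cauchyIntegrand hg.continuousOn hRU (half_lt_self hR)).mono
        (prod_mono ball_subset_closedBall subset_rfl))).fun_const_smul _
  exact ((hcont.congr fun p hp => pdx_eq_circleIntegral hU hg hRU
    (ball_subset_ball (half_le_self hR.le) hp)).continuousAt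
    (ball_mem_nhds p₀ (half_pos hR))).continuousWithinAt

theorem pdy_eq_pdx_comp_swap (g : ℂ × ℂ → ℂ) : pdy g = pdx (g ∘ Prod.swap) ∘ Prod.swap := rfl

theorem DifferentiableOn.comp_swap (hg : DifferentiableOn ℂ g U) :
    DifferentiableOn ℂ (g ∘ Prod.swap) (Prod.swap ⁻¹' U) :=
  hg.comp (differentiable_snd.prodMk differentiable_fst).differentiableOn fun _ h => h

theorem continuousOn_pdy (hU : IsOpen U) (hg : DifferentiableOn ℂ g U) :
    ContinuousOn (pdy g) U := by
  rw [pdy_eq_pdx_comp_swap]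
  exact (continuousOn_pdx (hU.preimage continuous_swap) hg.comp_swap).comp
    (continuous_swap (X := ℂ) (Y := ℂ)).continuousOn fun p hp => by simpa using hp

theorem HasDerivAt.hasFDerivAt_mul_fst_snd {𝕜 : Type*} [NontriviallyNormedField 𝕜]
    {k h : 𝕜 → 𝕜} {k' h' : 𝕜} {p : 𝕜 × 𝕜} (hk : HasDerivAt k k' p.1) (hh : HasDerivAt h h' p.2) :
    HasFDerivAt (fun q : 𝕜 × 𝕜 => k q.1 * h q.2)
      (k p.1 • h' • ContinuousLinearMap.snd 𝕜 𝕜 𝕜 + h p.2 • k' • ContinuousLinearMap.fst 𝕜 𝕜 𝕜)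
      p :=
  (hk.comp_hasFDerivAt p (hasFDerivAt_fst)).mul (hh.comp_hasFDerivAt p (hasFDerivAt_snd))

theorem hasDerivAt_inv_sub_sq {ζ z : ℂ} (hz : ζ - z ≠ 0) :
    HasDerivAt (fun x => ((ζ - x) ^ 2)⁻¹) (2 * ((ζ - z) ^ 3)⁻¹) z := by
  have h := (((hasDerivAt_id' z).const_sub ζ).fun_pow 2).fun_inv (pow_ne_zero 2 hz)
  refine h.congr_deriv ?_
  field_simp
  ring

theorem differentiableOn_pdx (hU : IsOpen U) (hg : DifferentiableOn ℂ g U) :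
    DifferentiableOn ℂ (pdx g) U := by
  intro p₀ hp₀
  obtain ⟨R, hR, hRU⟩ := nhds_basis_closedBall.mem_iff.1 (hU.mem_nhds hp₀)
  have hrR := half_lt_self hR
  set f' : ℂ × ℂ → ℂ → (ℂ × ℂ) →L[ℂ] ℂ := fun p ζ =>
    ((ζ - p.1) ^ 2)⁻¹ • pdy g (ζ, p.2) • ContinuousLinearMap.snd ℂ ℂ ℂ +
      g (ζ, p.2) • (2 * ((ζ - p.1) ^ 3)⁻¹) • ContinuousLinearMap.fst ℂ ℂ ℂ
  have hderiv : ∀ p ∈ ball p₀ (R / 2), ∀ ζ ∈ sphere p₀.1 R,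
      HasFDerivAt (fun q => ((ζ - q.1) ^ 2)⁻¹ • g (ζ, q.2)) (f' p ζ) p := by
    intro p hp ζ hζ
    have hgp : DifferentiableAt ℂ g (ζ, p.2) := hg.differentiableAt <| hU.mem_nhds <|
      hRU (mk_mem_closedBall_of_mem_sphere (ball_subset_closedBall hp) hζ hrR.le)
    have hslice : DifferentiableAt ℂ (fun w => g (ζ, w)) p.2 := by fun_prop
    exact HasDerivAt.hasFDerivAt_mul_fst_snd (k := fun z => ((ζ - z) ^ 2)⁻¹)
      (hasDerivAt_inv_sub_sq (sub_fst_ne_zero_of_mem_sphere (ball_subset_closedBall hp) hζ hrR))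
      hslice.hasDerivAt
  have hf' : ContinuousOn (Function.uncurry f') (closedBall p₀ (R / 2) ×ˢ sphere p₀.1 R) := by
    have hmaps := mapsTo_closedBall_prod_sphere hRU hrR.le
    have hpdy : ContinuousOn (fun q : (ℂ × ℂ) × ℂ => pdy g (q.2, q.1.2))
        (closedBall p₀ (R / 2) ×ˢ sphere p₀.1 R) :=
      (continuousOn_pdy hU hg).comp (by fun_prop) hmaps
    have hgq : ContinuousOn (fun q : (ℂ × ℂ) × ℂ => g (q.2, q.1.2))
        (closedBall p₀ (R / 2) ×ˢ sphere p₀.1 R) :=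
      hg.continuousOn.comp (by fun_prop) hmaps
    exact ((continuousOn_inv_sub_fst_pow hrR 2).smul (hpdy.smul continuousOn_const)).add
      (hgq.smul ((continuousOn_const.mul (continuousOn_inv_sub_fst_pow hrR 3)).smul
        continuousOn_const))
  have hf : ∀ p ∈ ball p₀ (R / 2),
      ContinuousOn (fun ζ => ((ζ - p.1) ^ 2)⁻¹ • g (ζ, p.2)) (sphere p₀.1 R) := fun p hp =>
    (continuousOn_cauchyIntegrand hg.continuousOn hRU hrR).comp (f := fun ζ => (p, ζ))
      (by fun_prop) fun _ hζ => ⟨ball_subset_closedBall hp, hζ⟩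
  have hint := hasFDerivAt_circleIntegral_of_continuousOn hR.le (half_pos hR) hf hf' hderiv
  refine ((hint.differentiableAt.fun_const_smul ((2 * π * I)⁻¹)).congr_of_eventuallyEq ?_)
    |>.differentiableWithinAt
  filter_upwards [ball_mem_nhds p₀ (half_pos hR)] with p hp
  exact pdx_eq_circleIntegral hU hg hRU (ball_subset_ball (half_le_self hR.le) hp)

theorem differentiableOn_pdy (hU : IsOpen U) (hg : DifferentiableOn ℂ g U) :
    DifferentiableOn ℂ (pdy g) U := by
  rw [pdy_eq_pdx_comp_swap]
  exact (differentiableOn_pdx (hU.preimage continuous_swap) hg.comp_swap).comp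
    (differentiable_snd.prodMk differentiable_fst).differentiableOn fun p hp => by simpa using hp

theorem sum_pdx_eq_zero {ι : Type*} [Fintype ι] {f : ι → ℂ × ℂ → ℂ} (hU : IsOpen U)
    (hf : ∀ i, DifferentiableOn ℂ (f i) U) (hsum : ∀ q ∈ U, ∑ i, f i q = 0) {p : ℂ × ℂ}
    (hp : p ∈ U) : ∑ i, pdx (f i) p = 0 := by
  have hslice : ∀ i ∈ Finset.univ, DifferentiableAt ℂ (fun z => f i (z, p.2)) p.1 := fun i _ => by
    have := (hf i).differentiableAt (hU.mem_nhds hp)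
    fun_prop
  have hev : (∑ i, fun z => f i (z, p.2)) =ᶠ[𝓝 p.1] fun _ => 0 := by
    filter_upwards [(hU.preimage (by fun_prop : Continuous fun z : ℂ => (z, p.2))).mem_nhds hp]
      with z hz
    simpa using hsum _ hz
  simp only [pdx]
  rw [← deriv_sum hslice, hev.deriv_eq, deriv_const]

theorem sum_pdy_eq_zero {ι : Type*} [Fintype ι] {f : ι → ℂ × ℂ → ℂ} (hU : IsOpen U)
    (hf : ∀ i, DifferentiableOn ℂ (f i) U) (hsum : ∀ q ∈ U, ∑ i, f i q = 0) {p : ℂ × ℂ}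
    (hp : p ∈ U) : ∑ i, pdy (f i) p = 0 :=
  sum_pdx_eq_zero (hU.preimage continuous_swap) (fun i => (hf i).comp_swap)
    (fun q hq => hsum _ hq) (p := p.swap) (by simpa using hp)

/-- The coefficient of `dx ∧ dy` in `d(a dx + b dy)`. -/
noncomputable def curl (a b : ℂ × ℂ → ℂ) (p : ℂ × ℂ) : ℂ :=
  pdx b p - pdy a p

theorem differentiableOn_curl {a b : ℂ × ℂ → ℂ} (hU : IsOpen U) (ha : DifferentiableOn ℂ a U)
    (hb : DifferentiableOn ℂ b U) : DifferentiableOn ℂ (curl a b) U :=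
  (differentiableOn_pdx hU hb).sub (differentiableOn_pdy hU ha)

theorem sum_curl_eq_zero {ι : Type*} [Fintype ι] {a b : ι → ℂ × ℂ → ℂ} (hU : IsOpen U)
    (ha : ∀ i, DifferentiableOn ℂ (a i) U) (hb : ∀ i, DifferentiableOn ℂ (b i) U)
    (hsum : ∀ q ∈ U, ∑ i, a i q = 0 ∧ ∑ i, b i q = 0) {p : ℂ × ℂ} (hp : p ∈ U) :
    ∑ i, curl (a i) (b i) p = 0 := by
  simp only [curl, Finset.sum_sub_distrib]
  rw [sum_pdx_eq_zero hU hb (fun q hq => (hsum q hq).2) hp,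
    sum_pdy_eq_zero hU ha (fun q hq => (hsum q hq).1) hp, sub_zero]

end Partials

section Cramer

variable {K : Type*} [Field K] {a₀ a₁ b₀ b₁ e f : K}

theorem eq_mul_sub_mul_of_cramer {c₀ c₁ : K} (hD : a₀ * b₁ - a₁ * b₀ ≠ 0)
    (he : e * (a₀ * b₁ - a₁ * b₀) = a₀ * c₁ - a₁ * c₀)
    (hf : f * (a₀ * b₁ - a₁ * b₀) = b₀ * c₁ - b₁ * c₀) :
    c₀ = e * b₀ - f * a₀ ∧ c₁ = e * b₁ - f * a₁ := by
  constructor <;> refine mul_right_cancel₀ hD ?_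
  · linear_combination -b₀ * he + a₀ * hf
  · linear_combination -b₁ * he + a₁ * hf

theorem eq_and_eq_of_mul_sub_mul_eq {e' f' : K} (hD : a₀ * b₁ - a₁ * b₀ ≠ 0)
    (h₀ : e * b₀ - f * a₀ = e' * b₀ - f' * a₀) (h₁ : e * b₁ - f * a₁ = e' * b₁ - f' * a₁) :
    e = e' ∧ f = f' := by
  constructor <;> refine sub_eq_zero.1 (mul_right_cancel₀ hD ?_)
  · linear_combination a₀ * h₁ - a₁ * h₀
  · linear_combination b₀ * h₁ - b₁ * h₀

end Cramer

/-- Let `α i = (a i) dx + (b i) dy`, `i = 1,2,3`, be holomorphic 1-forms on a domain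
`U ⊆ ℂ²` with pairwise wedge products nowhere zero, satisfying `α₁ + α₂ + α₃ = 0`.
Then there exists a unique holomorphic 1-form `η = e dx + f dy` with `dα i = η ∧ α i`
for each `i`; in coordinates, `∂x(b i) - ∂y(a i) = e·(b i) - f·(a i)` on `U`. -/
theorem stmt_2 (U : Set (ℂ × ℂ)) (hU : IsOpen U)
    (a b : Fin 3 → (ℂ × ℂ → ℂ))
    (ha : ∀ i, DifferentiableOn ℂ (a i) U) (hb : ∀ i, DifferentiableOn ℂ (b i) U)
    (hwedge : ∀ i j, i ≠ j → ∀ p ∈ U, a i p * b j p - a j p * b i p ≠ 0)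
    (hsum : ∀ p ∈ U, (∑ i, a i p) = 0 ∧ (∑ i, b i p) = 0) :
    ∃ e f : ℂ × ℂ → ℂ, DifferentiableOn ℂ e U ∧ DifferentiableOn ℂ f U ∧
      (∀ i, ∀ p ∈ U, pdx (b i) p - pdy (a i) p = e p * b i p - f p * a i p) ∧
      ∀ e' f' : ℂ × ℂ → ℂ,
        (∀ i, ∀ p ∈ U, pdx (b i) p - pdy (a i) p = e' p * b i p - f' p * a i p) →
        ∀ p ∈ U, e' p = e p ∧ f' p = f p := by
  set c : Fin 3 → ℂ × ℂ → ℂ := fun i => curl (a i) (b i)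
  set D : ℂ × ℂ → ℂ := fun p => a 0 p * b 1 p - a 1 p * b 0 p
  have hD : ∀ p ∈ U, D p ≠ 0 := hwedge 0 1 (by decide)
  have hc : ∀ i, DifferentiableOn ℂ (c i) U := fun i => differentiableOn_curl hU (ha i) (hb i)
  have hDinv : DifferentiableOn ℂ (fun p => (D p)⁻¹) U :=
    (((ha 0).mul (hb 1)).sub ((ha 1).mul (hb 0))).inv hD
  set e := fun p => (a 0 p * c 1 p - a 1 p * c 0 p) * (D p)⁻¹
  set f := fun p => (b 0 p * c 1 p - b 1 p * c 0 p) * (D p)⁻¹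
  have hef : ∀ p ∈ U, c 0 p = e p * b 0 p - f p * a 0 p ∧ c 1 p = e p * b 1 p - f p * a 1 p :=
    fun p hp => eq_mul_sub_mul_of_cramer (hD p hp) (inv_mul_cancel_right₀ (hD p hp) _)
      (inv_mul_cancel_right₀ (hD p hp) _)
  refine ⟨e, f, (((ha 0).mul (hc 1)).sub ((ha 1).mul (hc 0))).mul hDinv,
    (((hb 0).mul (hc 1)).sub ((hb 1).mul (hc 0))).mul hDinv, ?_, ?_⟩
  · intro i p hp
    have hcsum := sum_curl_eq_zero hU ha hb hsum hp
    obtain ⟨hasum, hbsum⟩ := hsum p hp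
    simp only [Fin.sum_univ_three] at hcsum hasum hbsum
    fin_cases i
    · exact (hef p hp).1
    · exact (hef p hp).2
    · change c 2 p = e p * b 2 p - f p * a 2 p
      linear_combination hcsum - (hef p hp).1 - (hef p hp).2 - e p * hbsum + f p * hasum
  · intro e' f' h' p hp
    exact eq_and_eq_of_mul_sub_mul_eq (hD p hp) ((h' 0 p hp).symm.trans (hef p hp).1)
      ((h' 1 p hp).symm.trans (hef p hp).2)
end

section
/- Let h₁,…,h_k be linear forms in n variables whose corresponding points in ℙ^{n-1} are in general position (any m ≤ n of the forms are linearly independent). Then for every positive integer j, the dimension of the span of h₁^j,…,h_k^j in ℂ_j[x₁,…,x_n] is at least min(k, j(n-1)+1). -/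
/-!
Write `ℓ_x = ∑ₐ xₐ Xₐ` for the linear form with coefficient vector `x`. A functional `φ` on `Kⁿ`
gives the constant-coefficient differential operator `∂_φ = ∑ₐ φ(eₐ) ∂/∂Xₐ`, and
`∂_{φ₁} ⋯ ∂_{φⱼ} ℓ_x^j = j! · φ₁(x) ⋯ φⱼ(x)` (apolarity). So the powers `ℓ_{xᵢ}^j`, `i ∈ S`, are
independent as soon as, for each `i ∈ S`, a product of `j` linear functionals vanishes at every
other `xᵢ'` but not at `xᵢ`. For `#S ≤ j(n-1)+1`, split `S \ {i}` into `j` groups of at most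
`n-1` points; by general position each group lies on a hyperplane missing `xᵢ`.
-/

open MvPolynomial Finset

section LinearIndependence

variable {K M ι : Type*} [Field K] [AddCommGroup M] [Module K M]

theorem linearIndepOn_of_exists_separating {N : Type*} [AddCommGroup N] [Module K N]
    {v : ι → M} {s : Set ι}
    (hsep : ∀ i ∈ s, ∃ f : M →ₗ[K] N, f (v i) ≠ 0 ∧ ∀ i' ∈ s, i' ≠ i → f (v i') = 0) :
    LinearIndepOn K v s := by
  classical
  rw [LinearIndepOn, linearIndependent_iff']
  intro t c hc i hi
  obtain ⟨f, hfi, hf⟩ := hsep i i.2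
  have : c i • f (v i) = 0 := by
    rw [← map_zero f, ← hc, map_sum, Finset.sum_eq_single_of_mem i hi]
    · exact (map_smul f _ _).symm
    · intro i' _ hne
      rw [map_smul, hf i' i'.2 (Subtype.coe_ne_coe.mpr hne), smul_zero]
  exact (smul_eq_zero.mp this).resolve_right hfi

theorem LinearIndepOn.card_le_finrank_span_range [Finite ι] {v : ι → M} {s : Finset ι}
    (hs : LinearIndepOn K v s) : #s ≤ Module.finrank K (Submodule.span K (Set.range v)) := by
  have := FiniteDimensional.span_of_finite K (Set.finite_range v)
  calc #s = Module.finrank K (Submodule.span K (Set.range fun i : (s : Set ι) => v i)) := by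
        rw [finrank_span_eq_card hs]; simp
    _ ≤ _ := Submodule.finrank_mono (Submodule.span_mono (Set.range_comp_subset_range _ v))

theorem LinearIndepOn.exists_dual_ne_zero_of_insert {v : ι → M} {s : Set ι} {i : ι}
    (hv : LinearIndepOn K v (insert i s)) (hi : i ∉ s) :
    ∃ φ : Module.Dual K M, φ (v i) ≠ 0 ∧ ∀ i' ∈ s, φ (v i') = 0 := by
  obtain ⟨φ, hφi, hφs⟩ := Submodule.exists_dual_map_eq_bot_of_notMem
    ((linearIndepOn_insert hi).mp hv).2 inferInstance
  refine ⟨φ, hφi, fun i' hi' => ?_⟩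
  have : φ (v i') ∈ (Submodule.span K (v '' s)).map φ :=
    Submodule.mem_map_of_mem (Submodule.subset_span ⟨i', hi', rfl⟩)
  rwa [hφs, Submodule.mem_bot] at this

theorem exists_list_dual_prod_ne_zero {v : ι → M} {p : ℕ}
    (hv : ∀ I : Finset ι, #I ≤ p + 1 → LinearIndepOn K v I) {i : ι} :
    ∀ (j : ℕ) (T : Finset ι), i ∉ T → #T ≤ j * p →
      ∃ φs : List (Module.Dual K M), φs.length = j ∧ (φs.map (· (v i))).prod ≠ 0 ∧
        ∀ i' ∈ T, (φs.map (· (v i'))).prod = 0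
  | 0, T, _, hT => ⟨[], rfl, by simp, by simp_all⟩
  | j + 1, T, hiT, hT => by
    classical
    obtain ⟨A, hAT, hA⟩ := T.exists_subset_card_eq (min_le_right p #T)
    obtain ⟨φs, hlen, hφs_i, hφs_T⟩ := exists_list_dual_prod_ne_zero hv j (T \ A)
      (fun h => hiT (mem_sdiff.mp h).1) (by rw [card_sdiff_of_subset hAT]; grind)
    have hvA : LinearIndepOn K v (insert i (A : Set ι)) := by
      simpa using hv (insert i A) ((card_insert_le i A).trans (by omega))
    obtain ⟨φ, hφ_i, hφ_A⟩ := hvA.exists_dual_ne_zero_of_insert (fun h => hiT (hAT h))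
    refine ⟨φ :: φs, by simp [hlen], by simp [hφ_i, hφs_i], fun i' hi' => ?_⟩
    by_cases hi'A : i' ∈ A
    · simp [hφ_A i' hi'A]
    · simp [hφs_T i' (mem_sdiff.mpr ⟨hi', hi'A⟩)]

end LinearIndependence

namespace MvPolynomial

variable {K σ : Type*} [CommSemiring K] [Fintype σ] [DecidableEq σ]

noncomputable def linearForm (x : σ → K) : MvPolynomial σ K := ∑ a, C (x a) * X a

noncomputable def dualDerivation (φ : Module.Dual K (σ → K)) :
    Derivation K (MvPolynomial σ K) (MvPolynomial σ K) :=
  mkDerivation K fun a => C (φ (Pi.single a 1))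

theorem dualDerivation_linearForm (φ : Module.Dual K (σ → K)) (x : σ → K) :
    dualDerivation φ (linearForm x) = C (φ x) := by
  have hφ : φ x = ∑ a, x a * φ (Pi.single a 1) := by
    conv_lhs => rw [← (Pi.basisFun K σ).sum_repr x]
    simp
  rw [hφ, map_sum, linearForm, map_sum]
  refine Finset.sum_congr rfl fun a _ => ?_
  rw [C_mul', Derivation.map_smul, dualDerivation, mkDerivation_X, smul_eq_C_mul, C_mul]

theorem dualDerivation_linearForm_pow (φ : Module.Dual K (σ → K)) (x : σ → K) (m : ℕ) :
    dualDerivation φ (linearForm x ^ (m + 1)) = ((m + 1) * φ x) • linearForm x ^ m := by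
  rw [Derivation.leibniz_pow, dualDerivation_linearForm, Nat.add_sub_cancel, smul_eq_C_mul]
  simp only [nsmul_eq_mul, smul_eq_mul, map_mul, map_add, map_one, map_natCast, Nat.cast_add,
    Nat.cast_one]
  ring

noncomputable def dualDerivationComp :
    List (Module.Dual K (σ → K)) → Module.End K (MvPolynomial σ K)
  | [] => LinearMap.id
  | φ :: φs => dualDerivationComp φs ∘ₗ (dualDerivation φ).toLinearMap

theorem dualDerivationComp_linearForm_pow (φs : List (Module.Dual K (σ → K))) (x : σ → K) :
    dualDerivationComp φs (linearForm x ^ φs.length) =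
      C (φs.length.factorial * (φs.map (· x)).prod) := by
  induction φs with
  | nil => simp [dualDerivationComp]
  | cons φ φs ih =>
    rw [dualDerivationComp, LinearMap.comp_apply, List.length_cons, Derivation.coeFn_coe,
      dualDerivation_linearForm_pow, map_smul, ih, smul_eq_C_mul, ← C_mul]
    simp only [Nat.factorial_succ, Nat.cast_mul, Nat.cast_add, Nat.cast_one, List.map_cons,
      List.prod_cons, C_mul, C_add, C_1, map_natCast]
    ring

end MvPolynomial

theorem linearIndepOn_linearForm_pow {K σ : Type*} [Field K] [CharZero K] [Fintype σ]
    [DecidableEq σ] {ι : Type*} {x : ι → σ → K} {p j : ℕ}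
    (hx : ∀ I : Finset ι, #I ≤ p + 1 → LinearIndepOn K x I) {S : Finset ι}
    (hS : #S ≤ j * p + 1) : LinearIndepOn K (fun i => linearForm (x i) ^ j) S := by
  classical
  refine linearIndepOn_of_exists_separating (N := MvPolynomial σ K) fun i hi => ?_
  obtain ⟨φs, rfl, hφs_i, hφs_S⟩ := exists_list_dual_prod_ne_zero hx j (S.erase i)
    (notMem_erase i S) (by rw [card_erase_of_mem hi]; omega)
  refine ⟨dualDerivationComp φs, ?_, fun i' hi' hne => ?_⟩
  · simp [dualDerivationComp_linearForm_pow, hφs_i, Nat.factorial_ne_zero]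
  · rw [dualDerivationComp_linearForm_pow, hφs_S i' (mem_erase.mpr ⟨hne, hi'⟩), mul_zero, C_0]

theorem stmt_6_general (n k j : ℕ) (hn : 1 ≤ n)
    (h : Fin k → (Fin n → ℂ))
    (hgen : ∀ I : Finset (Fin k), I.card ≤ n →
      LinearIndependent ℂ (fun i : I => h i.1)) :
    min k (j * (n - 1) + 1) ≤
      Module.finrank ℂ ↥(Submodule.span ℂ (Set.range fun i : Fin k =>
        (∑ a : Fin n, MvPolynomial.C (h i a) * MvPolynomial.X a) ^ j)) := by
  obtain ⟨S, -, hS⟩ := (univ : Finset (Fin k)).exists_subset_card_eq (n := min k (j * (n - 1) + 1))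
    (by simp)
  have hgen' : ∀ I : Finset (Fin k), #I ≤ n - 1 + 1 → LinearIndepOn ℂ h I := by
    rwa [Nat.sub_add_cancel hn]
  rw [← hS]
  exact (linearIndepOn_linearForm_pow hgen' (hS ▸ min_le_right _ _)).card_le_finrank_span_range

/-- Let `h₁, …, h_k` be linear forms in `n` variables (coefficient vectors `h i`) whose
corresponding points of `ℙ^{n-1}` are in general position: any `m ≤ n` of the forms are
linearly independent.  Then for every `j ≥ 1` the span of `ℓ₁^j, …, ℓ_k^j` in the space of
degree-`j` homogeneous polynomials has dimension at least `min (k, j(n-1)+1)`. -/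
theorem stmt_6 (n k j : ℕ) (hn : 1 ≤ n) (hj : 1 ≤ j)
    (h : Fin k → (Fin n → ℂ))
    (hgen : ∀ I : Finset (Fin k), I.card ≤ n →
      LinearIndependent ℂ (fun i : I => h i.1)) :
    min k (j * (n - 1) + 1) ≤
      Module.finrank ℂ ↥(Submodule.span ℂ (Set.range fun i : Fin k =>
        (∑ a : Fin n, MvPolynomial.C (h i a) * MvPolynomial.X a) ^ j)) :=
  stmt_6_general n k j hn h hgen
end

section
/- Let W be a germ of quasi-smooth k-web on (ℂⁿ,0) with filtration F^j A(W) of its space of abelian relations by vanishing order at 0. Then dim( F^j A(W) / F^{j+1} A(W) ) ≤ max(0, k − ℓ^{j+1}(W)), where ℓ^{j+1}(W) is the dimension of the span of the (j+1)-st powers of the linear parts at 0 of the defining submersions. -/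
/-!
Restrict an abelian relation `∑ i, g i (u i x) = 0` in `F^j` to a line `x = t • v`. Each `g i`
is `y ^ (j + 1)` times a function continuous at `0`, so dividing by `t ^ (j + 1)` and letting
`t → 0` gives `∑ i, g i⁽ʲ⁺¹⁾(0) * (du i (0) v) ^ (j + 1) = 0`. Hence the `(j + 1)`-st
derivatives of a family independent modulo `F^{j+1}` are independent vectors in the kernel of
`c ↦ ∑ i, c i • h i ^ (j + 1)`, which has dimension `k - ℓ^{j+1}` by rank–nullity.
-/

open Filter Topology

section OneVariable

variable {𝕜 : Type*} [NontriviallyNormedField 𝕜]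

lemma iteratedDeriv_sum_const_mul {κ : Type*} [Fintype κ]
    {f : κ → 𝕜 → 𝕜} {s : ℕ} {x : 𝕜} (hf : ∀ m, ContDiffAt 𝕜 s (f m) x) (c : κ → 𝕜) :
    iteratedDeriv s (fun t => ∑ m, c m * f m t) x = ∑ m, c m * iteratedDeriv s (f m) x := by
  rw [iteratedDeriv_fun_sum fun m _ => contDiffAt_const.mul (hf m)]
  exact Finset.sum_congr rfl fun m _ => iteratedDeriv_const_mul (c m) (hf m)

lemma AnalyticAt.exists_eventuallyEq_pow_mul_of_iteratedDeriv_eq_zero [CharZero 𝕜]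
    [CompleteSpace 𝕜] {f : 𝕜 → 𝕜} (hf : AnalyticAt 𝕜 f 0) {j : ℕ}
    (hj : ∀ s ≤ j, iteratedDeriv s f 0 = 0) :
    ∃ F : 𝕜 → 𝕜, ContinuousAt F 0 ∧ F 0 = iteratedDeriv (j + 1) f 0 / (j + 1).factorial ∧
      ∀ᶠ z in 𝓝 0, f z = z ^ (j + 1) * F z := by
  obtain ⟨G, hG, hfG⟩ := hf.exists_eventuallyEq_sum_add_pow_mul (j + 2)
  refine ⟨fun z => iteratedDeriv (j + 1) f 0 / (j + 1).factorial + z * G z,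
    by fun_prop, by simp, ?_⟩
  filter_upwards [hfG] with z hz
  rw [hz, Finset.sum_range_succ, Finset.sum_eq_zero fun s hs => by
    rw [hj s (Finset.mem_range_succ_iff.1 hs), smul_zero]]
  simp only [smul_eq_mul]
  ring

lemma tendsto_comp_div_pow {f F g : 𝕜 → 𝕜} {d : ℕ} {h : 𝕜}
    (hfF : ∀ᶠ z in 𝓝 0, f z = z ^ d * F z) (hF : ContinuousAt F 0)
    (hg : HasDerivAt g h 0) (hg0 : g 0 = 0) :
    Tendsto (fun t => f (g t) / t ^ d) (𝓝[≠] 0) (𝓝 (h ^ d * F 0)) := by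
  have hg_tendsto : Tendsto g (𝓝 0) (𝓝 0) := by simpa [hg0] using hg.continuousAt.tendsto
  have hslope : Tendsto (fun t => g t / t) (𝓝[≠] 0) (𝓝 h) :=
    (hasDerivAt_iff_tendsto_slope.1 hg).congr fun t => by simp [slope_def_field, hg0]
  have hFg : Tendsto (fun t => F (g t)) (𝓝[≠] 0) (𝓝 (F 0)) :=
    (hF.tendsto.comp hg_tendsto).mono_left nhdsWithin_le_nhds
  refine ((hslope.pow d).mul hFg).congr' ?_
  filter_upwards [self_mem_nhdsWithin, nhdsWithin_le_nhds (hg_tendsto.eventually hfF)]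
    with t (ht : t ≠ 0) hft
  rw [hft, div_pow]
  field_simp

lemma sum_pow_mul_eq_zero_of_sum_comp_eq_zero {ι : Type*} [Fintype ι] {f F g : ι → 𝕜 → 𝕜}
    {d : ℕ} {h : ι → 𝕜} (hfF : ∀ i, ∀ᶠ z in 𝓝 0, f i z = z ^ d * F i z)
    (hF : ∀ i, ContinuousAt (F i) 0) (hg : ∀ i, HasDerivAt (g i) (h i) 0)
    (hg0 : ∀ i, g i 0 = 0) (hsum : ∀ᶠ t in 𝓝 0, ∑ i, f i (g i t) = 0) :
    ∑ i, h i ^ d * F i 0 = 0 := by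
  have hlim : Tendsto (fun t => ∑ i, f i (g i t) / t ^ d) (𝓝[≠] 0) (𝓝 (∑ i, h i ^ d * F i 0)) :=
    tendsto_finsetSum _ fun i _ => tendsto_comp_div_pow (hfF i) (hF i) (hg i) (hg0 i)
  refine tendsto_nhds_unique hlim (tendsto_const_nhds.congr' ?_)
  filter_upwards [nhdsWithin_le_nhds hsum] with t ht
  rw [← Finset.sum_div, ht, zero_div]

end OneVariable

lemma le_card_sub_finrank_span_of_linearIndependent {K M ι κ : Type*} [Field K]
    [AddCommGroup M] [Module K M] [Fintype ι] [Fintype κ] (P : ι → M) {a : κ → ι → K}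
    (ha : LinearIndependent K a) (hrel : ∀ m, ∑ i, a m i • P i = 0) :
    Fintype.card κ ≤ Fintype.card ι - Module.finrank K (Submodule.span K (Set.range P)) := by
  set L := Fintype.linearCombination K P
  have hspan : Submodule.span K (Set.range a) ≤ LinearMap.ker L :=
    Submodule.span_le.2 <| Set.range_subset_iff.2 fun m => by
      simpa [L, Fintype.linearCombination_apply] using hrel m
  have hker : Fintype.card κ ≤ Module.finrank K (LinearMap.ker L) :=
    (finrank_span_eq_card ha).symm.le.trans (Submodule.finrank_mono hspan)
  have hrank := L.finrank_range_add_finrank_ker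
  rw [Fintype.range_linearCombination, Module.finrank_fintype_fun_eq_card] at hrank
  omega

section Web

variable {𝕜 E ι : Type*} [NontriviallyNormedField 𝕜] [CharZero 𝕜] [CompleteSpace 𝕜]
  [NormedAddCommGroup E] [NormedSpace 𝕜 E] [Fintype ι]

lemma sum_iteratedDeriv_mul_fderiv_pow_eq_zero {u : ι → E → 𝕜}
    (hu : ∀ i, DifferentiableAt 𝕜 (u i) 0) (hu0 : ∀ i, u i 0 = 0) {f : ι → 𝕜 → 𝕜}
    (hf : ∀ i, AnalyticAt 𝕜 (f i) 0) {j : ℕ} (hj : ∀ i, ∀ s ≤ j, iteratedDeriv s (f i) 0 = 0)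
    (hrel : ∀ᶠ x in 𝓝 0, ∑ i, f i (u i x) = 0) (v : E) :
    ∑ i, iteratedDeriv (j + 1) (f i) 0 * fderiv 𝕜 (u i) 0 v ^ (j + 1) = 0 := by
  choose F hF hF0 hfF using fun i =>
    (hf i).exists_eventuallyEq_pow_mul_of_iteratedDeriv_eq_zero (hj i)
  have hline : HasDerivAt (fun t : 𝕜 => t • v) v 0 := by
    simpa using (hasDerivAt_id (0 : 𝕜)).smul_const v
  have hg (i : ι) : HasDerivAt (fun t : 𝕜 => u i (t • v)) (fderiv 𝕜 (u i) 0 v) 0 := by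
    have hu' : HasFDerivAt (u i) (fderiv 𝕜 (u i) 0) ((0 : 𝕜) • v) := by
      simpa using (hu i).hasFDerivAt
    exact hu'.comp_hasDerivAt 0 hline
  have hline_tendsto : Tendsto (fun t : 𝕜 => t • v) (𝓝 0) (𝓝 0) := by
    simpa using hline.continuousAt.tendsto
  have hsum : ∀ᶠ t in 𝓝 (0 : 𝕜), ∑ i, f i (u i (t • v)) = 0 := hline_tendsto.eventually hrel
  have := sum_pow_mul_eq_zero_of_sum_comp_eq_zero hfF hF hg (fun i => by simp [hu0]) hsum
  simp only [hF0, mul_div_assoc', ← Finset.sum_div, div_eq_zero_iff, Nat.cast_eq_zero,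
    Nat.factorial_ne_zero, or_false] at this
  simpa only [mul_comm] using this

end Web

/-- Abelian relations are encoded by their primitives `r m i` (the component 1-forms are
`d (r m i ∘ u i)`), and `dim (F^j A(W) / F^{j+1} A(W))` by the size of a family independent
modulo `F^{j+1} A(W)`. -/
theorem stmt_7_general (n k j N : ℕ)
    (u : Fin k → ((Fin n → ℂ) → ℂ))
    (hu : ∀ i, AnalyticAt ℂ (u i) 0) (hu0 : ∀ i, u i 0 = 0)
    (r : Fin N → (Fin k → (ℂ → ℂ)))
    -- each `r m` is an abelian relation of the web:
    (hAR : ∀ m, (∀ i, AnalyticAt ℂ (r m i) 0 ∧ r m i 0 = 0) ∧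
        ∀ᶠ x in nhds (0 : Fin n → ℂ), ∑ i, r m i (u i x) = 0)
    -- each `r m` lies in `F^j A(W)`:
    (hFj : ∀ m i, ∀ s ≤ j, iteratedDeriv s (r m i) 0 = 0)
    -- the family is linearly independent modulo `F^{j+1} A(W)`:
    (hindep : ∀ c : Fin N → ℂ,
        (∀ i, ∀ s ≤ j + 1, iteratedDeriv s (fun t => ∑ m, c m * r m i t) 0 = 0) → c = 0) :
    N ≤ k - Module.finrank ℂ ↥(Submodule.span ℂ
        (Set.range fun i : Fin k => fun v : Fin n → ℂ => (fderiv ℂ (u i) 0 v) ^ (j + 1))) := by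
  set a : Fin N → Fin k → ℂ := fun m i => iteratedDeriv (j + 1) (r m i) 0
  have hrel (m : Fin N) :
      ∑ i, a m i • (fun v : Fin n → ℂ => fderiv ℂ (u i) 0 v ^ (j + 1)) = 0 := funext fun v => by
    simpa using sum_iteratedDeriv_mul_fderiv_pow_eq_zero (fun i => (hu i).differentiableAt) hu0
      (fun i => ((hAR m).1 i).1) (hFj m) (hAR m).2 v
  have ha : LinearIndependent ℂ a := by
    refine Fintype.linearIndependent_iff.2 fun c hc => congrFun <| hindep c fun i s hs => ?_
    rw [iteratedDeriv_sum_const_mul (fun m => ((hAR m).1 i).1.contDiffAt) c]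
    rcases hs.lt_or_eq with hs | rfl
    · simp [hFj _ i s (Nat.lt_succ_iff.1 hs)]
    · simpa [a] using congrFun hc i
  simpa using le_card_sub_finrank_span_of_linearIndependent _ ha hrel

/-- Let `W` be a germ of quasi-smooth `k`-web on `(ℂⁿ,0)`, given by holomorphic submersions
`u i : (ℂⁿ,0) → (ℂ,0)` whose differentials at `0` are nonzero and pairwise non-proportional.
Abelian relations are represented by their primitives: tuples `g = (g i)` of germs of
holomorphic functions vanishing at `0` with `∑ i, g i ∘ u i = 0` near `0`; the component
1-forms are `η i = d(g i ∘ u i)`.  A relation lies in `F^j A(W)` iff the derivatives of each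
`g i` at `0` vanish up to order `j` (so each `η i` vanishes to order `j` at `0`).  Then
`dim (F^j A(W) / F^{j+1} A(W)) ≤ max (0, k - ℓ^{j+1}(W))`, where `ℓ^{j+1}(W)` is the
dimension of the span of the `(j+1)`-st powers of the linear parts of the `u i` at `0`:
i.e. any family of relations in `F^j A(W)` that is linearly independent modulo
`F^{j+1} A(W)` has at most `k - ℓ^{j+1}(W)` members (truncated subtraction). -/
theorem stmt_7 (n k j N : ℕ)
    (u : Fin k → ((Fin n → ℂ) → ℂ))
    (hu : ∀ i, AnalyticAt ℂ (u i) 0) (hu0 : ∀ i, u i 0 = 0)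
    (hsub : ∀ i, fderiv ℂ (u i) 0 ≠ 0)
    (hquasi : ∀ i i' : Fin k, i ≠ i' → ∀ c : ℂ,
      fderiv ℂ (u i) 0 ≠ c • fderiv ℂ (u i') 0)
    (r : Fin N → (Fin k → (ℂ → ℂ)))
    -- each `r m` is an abelian relation of the web:
    (hAR : ∀ m, (∀ i, AnalyticAt ℂ (r m i) 0 ∧ r m i 0 = 0) ∧
        ∀ᶠ x in nhds (0 : Fin n → ℂ), ∑ i, r m i (u i x) = 0)
    -- each `r m` lies in `F^j A(W)`:
    (hFj : ∀ m i, ∀ s ≤ j, iteratedDeriv s (r m i) 0 = 0)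
    -- the family is linearly independent modulo `F^{j+1} A(W)`:
    (hindep : ∀ c : Fin N → ℂ,
        (∀ i, ∀ s ≤ j + 1, iteratedDeriv s (fun t => ∑ m, c m * r m i t) 0 = 0) → c = 0) :
    N ≤ k - Module.finrank ℂ ↥(Submodule.span ℂ
        (Set.range fun i : Fin k => fun v : Fin n → ℂ => (fderiv ℂ (u i) 0 v) ^ (j + 1))) :=
  stmt_7_general n k j N u hu hu0 r hAR hFj hindep
end

section
/- The space of abelian relations of a quasi-smooth k-web on (ℂⁿ,0) has dimension at most Σ_{j=0}^{k-3} max(0, k − ℓ^{j+1}(W)). If moreover the web is smooth (tangent spaces at 0 in general position), then the rank is at most the Castelnuovo number π(n,k) = Σ_{j=1}^{∞} max(0, k − j(n−1) − 1). -/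
/-!
Restrict a relation `∑ g i ∘ u i = 0` to a line `t ↦ t • v`. If every `g i` vanishes to order
`m` at `0`, dividing by `t ^ m` and letting `t → 0` gives `∑ a i * (du_i(0) v) ^ m = 0`, where
`a i` is the `m`-th Taylor coefficient of `g i`. So the leading coefficients of a relation in
`F^j` lie in the kernel of `a ↦ ∑ a i • (du_i(0))^(j+1)`, of dimension `k - ℓ^(j+1)`, which bounds
`dim F^j - dim F^(j+1)`; summing gives the first bound once `F^(k-2) = 0`.

Both remaining facts come from one lemma on powers of linear forms: if no form lies in the span
of `s` others, then any `d * s + 1` of their `d`-th powers are independent, by differentiating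
along a direction that kills `s` of the forms but not a chosen one. Hence `ℓ^d ≥ min k (d s + 1)`:
for a quasi-smooth web (`s = 1`) the `d`-th powers are independent for `d ≥ k - 1`, which forces
`F^(k-2) = 0`, and for a smooth web (`s = n - 1`) this turns the first bound into `π(n, k)`.
-/

open Filter Function Topology

/-- The `m`-th Taylor coefficient at `0`, as an iterated difference quotient (a junk value unless
`f` is analytic at `0`). -/
noncomputable def taylorCoeff (f : ℂ → ℂ) (m : ℕ) : ℂ := (swap dslope 0)^[m] f 0

theorem HasFPowerSeriesAt.taylorCoeff_eq {f : ℂ → ℂ} {p : FormalMultilinearSeries ℂ ℂ ℂ}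
    (hp : HasFPowerSeriesAt f p 0) (m : ℕ) : taylorCoeff f m = p.coeff m := by
  simpa [taylorCoeff, FormalMultilinearSeries.coeff_iterate_fslope] using
    ((hp.has_fpower_series_iterate_dslope_fslope m).coeff_zero 1).symm

theorem AnalyticAt.taylorCoeff_add {f g : ℂ → ℂ} (hf : AnalyticAt ℂ f 0)
    (hg : AnalyticAt ℂ g 0) (m : ℕ) :
    taylorCoeff (f + g) m = taylorCoeff f m + taylorCoeff g m := by
  obtain ⟨p, hp⟩ := hf
  obtain ⟨q, hq⟩ := hg
  rw [(hp.add hq).taylorCoeff_eq, hp.taylorCoeff_eq, hq.taylorCoeff_eq]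
  rfl

theorem AnalyticAt.taylorCoeff_const_smul {f : ℂ → ℂ} (hf : AnalyticAt ℂ f 0) (a : ℂ)
    (m : ℕ) : taylorCoeff (a • f) m = a * taylorCoeff f m := by
  obtain ⟨p, hp⟩ := hf
  rw [hp.const_smul.taylorCoeff_eq, hp.taylorCoeff_eq]
  rfl

theorem taylorCoeff_sum_mul {κ : Type*} (s : Finset κ) (c : κ → ℂ) {f : κ → ℂ → ℂ}
    (hf : ∀ m ∈ s, AnalyticAt ℂ (f m) 0) (e : ℕ) :
    taylorCoeff (fun t => ∑ m ∈ s, c m * f m t) e = ∑ m ∈ s, c m * taylorCoeff (f m) e := by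
  classical
  induction s using Finset.induction_on with
  | empty =>
    simpa [FormalMultilinearSeries.coeff] using
      (hasFPowerSeriesAt_const (c := (0 : ℂ)) (e := 0)).taylorCoeff_eq e
  | insert m s hm ih =>
    rw [Finset.forall_mem_insert] at hf
    have hsum : AnalyticAt ℂ (fun t => ∑ m ∈ s, c m * f m t) 0 :=
      Finset.analyticAt_fun_sum _ fun m hm' => analyticAt_const.mul (hf.2 m hm')
    simp_rw [Finset.sum_insert hm]
    rw [← ih hf.2, ← hf.1.taylorCoeff_const_smul,
      ← (hf.1.const_smul (c := c m)).taylorCoeff_add hsum]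
    rfl

theorem AnalyticAt.eventually_eq_zero_of_taylorCoeff {f : ℂ → ℂ} (hf : AnalyticAt ℂ f 0)
    (h : ∀ m, taylorCoeff f m = 0) : ∀ᶠ z in 𝓝 0, f z = 0 := by
  obtain ⟨p, hp⟩ := hf
  obtain rfl : p = 0 := by
    ext m : 1
    exact FormalMultilinearSeries.coeff_eq_zero.mp (hp.taylorCoeff_eq m ▸ h m)
  exact hp.eventually_eq_zero

theorem sum_taylorCoeff_mul_pow_eq_zero_of_hasDerivAt {ι : Type*} [Fintype ι]
    {g w : ι → ℂ → ℂ} {a : ι → ℂ} (hg : ∀ i, AnalyticAt ℂ (g i) 0)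
    (hw : ∀ i, HasDerivAt (w i) (a i) 0) (hw0 : ∀ i, w i 0 = 0)
    (hrel : ∀ᶠ t in 𝓝 0, ∑ i, g i (w i t) = 0) {m : ℕ}
    (hlow : ∀ i, ∀ e < m, taylorCoeff (g i) e = 0) :
    ∑ i, taylorCoeff (g i) m * a i ^ m = 0 := by
  set h : ι → ℂ → ℂ := fun i => (swap dslope 0)^[m] (g i)
  have hfactor : ∀ i z, z ^ m * h i z = g i z := fun i z => by
    simpa using pow_sub_smul_iterate_dslope_of_zero m (hlow i) z
  set F : ℂ → ℂ := fun t => ∑ i, slope (w i) 0 t ^ m * h i (w i t)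
  have hF : ∀ᶠ t in 𝓝[≠] 0, F t = 0 := by
    filter_upwards [nhdsWithin_le_nhds hrel, self_mem_nhdsWithin] with t ht ht0
    replace ht0 : t ≠ 0 := ht0
    refine (mul_eq_zero.mp ?_).resolve_left (pow_ne_zero m ht0)
    rw [← ht, Finset.mul_sum]
    refine Finset.sum_congr rfl fun i _ => ?_
    rw [← hfactor, slope_def_field, hw0, sub_zero, sub_zero, div_pow]
    field_simp
  have hlim : Tendsto F (𝓝[≠] 0) (𝓝 (∑ i, a i ^ m * h i 0)) := by
    refine tendsto_finsetSum _ fun i _ => ((hasDerivAt_iff_tendsto_slope.mp (hw i)).pow m).mul ?_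
    obtain ⟨p, hp⟩ := hg i
    have hcont : ContinuousAt (h i) (w i 0) := by
      rw [hw0]; exact (hp.has_fpower_series_iterate_dslope_fslope m).continuousAt
    simpa only [comp_def, hw0] using
      (hcont.tendsto.comp (hw i).continuousAt.tendsto).mono_left nhdsWithin_le_nhds
  have := tendsto_nhds_unique hlim (tendsto_const_nhds.congr' (EventuallyEq.symm hF))
  rw [← this]
  exact Finset.sum_congr rfl fun i _ => mul_comm _ _

theorem sum_taylorCoeff_mul_fderiv_pow_eq_zero {E : Type*} [NormedAddCommGroup E]
    [NormedSpace ℂ E] {ι : Type*} [Fintype ι] {u : ι → E → ℂ} {g : ι → ℂ → ℂ}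
    (hu : ∀ i, DifferentiableAt ℂ (u i) 0) (hu0 : ∀ i, u i 0 = 0)
    (hg : ∀ i, AnalyticAt ℂ (g i) 0) (hrel : ∀ᶠ x in 𝓝 0, ∑ i, g i (u i x) = 0) {m : ℕ}
    (hlow : ∀ i, ∀ e < m, taylorCoeff (g i) e = 0) (v : E) :
    ∑ i, taylorCoeff (g i) m * fderiv ℂ (u i) 0 v ^ m = 0 := by
  have hline : Tendsto (fun t : ℂ => t • v) (𝓝 0) (𝓝 0) :=
    (continuous_id.smul continuous_const).tendsto' 0 0 (zero_smul ℂ v)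
  refine sum_taylorCoeff_mul_pow_eq_zero_of_hasDerivAt hg (fun i => ?_) (by simpa using hu0)
    (hline.eventually hrel) hlow
  have hd := (hu i).hasFDerivAt.comp_hasDerivAt_of_eq (0 : ℂ) ((hasDerivAt_id (0 : ℂ)).smul_const v)
    (zero_smul ℂ v).symm
  simpa [comp_def] using hd

section Separating

variable {K V ι : Type*} [Field K] [AddCommGroup V] [Module K V]

def IsSeparating (L : ι → Module.Dual K V) (s : ℕ) : Prop :=
  ∀ i (S : Finset ι), i ∉ S → S.card ≤ s → L i ∉ Submodule.span K (L '' S)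

variable {L : ι → Module.Dual K V} {s : ℕ}

namespace IsSeparating

theorem exists_apply_eq_zero_apply_ne_zero (hL : IsSeparating L s) {i : ι} {S : Finset ι}
    (hi : i ∉ S) (hS : S.card ≤ s) : ∃ v, (∀ j ∈ S, L j v = 0) ∧ L i v ≠ 0 := by
  by_contra! h
  refine hL i S hi hS ?_
  rw [Set.image_eq_range]
  refine mem_span_of_iInf_ker_le_ker fun v hv => ?_
  simp only [Submodule.mem_iInf, LinearMap.mem_ker] at hv ⊢
  exact h v fun j hj => hv ⟨j, hj⟩

theorem of_linearIndepOn (h : ∀ I : Finset ι, I.card ≤ s + 1 → LinearIndepOn K L I) :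
    IsSeparating L s := by
  classical
  intro i S hi hS
  have hI := h (insert i S) (by rw [Finset.card_insert_of_notMem hi]; omega)
  rw [Finset.coe_insert] at hI
  exact hI.notMem_span_of_insert hi

theorem one_of_ne_smul (h0 : ∀ i, L i ≠ 0) (h : ∀ i j, i ≠ j → ∀ c : K, L i ≠ c • L j) :
    IsSeparating L 1 := by
  intro i S hi hS
  rcases Nat.le_one_iff_eq_zero_or_eq_one.mp hS with hS | hS
  · rw [Finset.card_eq_zero.mp hS]
    simpa using h0 i
  · obtain ⟨j, rfl⟩ := Finset.card_eq_one.mp hS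
    rw [Finset.coe_singleton, Set.image_singleton, Submodule.mem_span_singleton]
    rintro ⟨c, hc⟩
    exact h i j (by simpa using hi) c hc.symm

end IsSeparating

open Polynomial in
/-- Differentiate `t ↦ ∑ c i * L i (x + t • v) ^ (d + 1)` at `t = 0`. -/
theorem sum_mul_apply_mul_pow_eq_zero [CharZero K] {T : Finset ι} {c : ι → K} {d : ℕ}
    (h : ∀ x, ∑ i ∈ T, c i * L i x ^ (d + 1) = 0) (v x : V) :
    ∑ i ∈ T, c i * L i v * L i x ^ d = 0 := by
  set p : K[X] := ∑ i ∈ T, C (c i) * (C (L i x) + C (L i v) * X) ^ (d + 1)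
  have hp : p = 0 := Polynomial.funext fun t => by
    simpa [p, eval_finsetSum, mul_comm t] using h (x + t • v)
  have hD := congrArg (fun q => (derivative q).eval 0) hp
  simp only [p, derivative_sum, derivative_mul, derivative_C, derivative_pow, derivative_add,
    derivative_X, eval_finsetSum, eval_mul, eval_add, eval_pow, eval_C, eval_X,
    zero_mul, zero_add, mul_one, mul_zero, add_zero, derivative_zero, eval_zero,
    Nat.add_sub_cancel, Nat.cast_add_one] at hD
  refine (mul_eq_zero.mp (?_ : ((d : K) + 1) * _ = 0)).resolve_left (Nat.cast_add_one_ne_zero d)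
  rw [Finset.mul_sum, ← hD]
  exact Finset.sum_congr rfl fun i _ => by ring

namespace IsSeparating

variable [CharZero K]

theorem eq_zero_of_sum_mul_pow_eq_zero (hL : IsSeparating L s) {d : ℕ} :
    ∀ {T : Finset ι} {c : ι → K}, T.card ≤ d * s + 1 →
      (∀ x, ∑ i ∈ T, c i * L i x ^ d = 0) → ∀ i ∈ T, c i = 0 := by
  classical
  induction d with
  | zero =>
    intro T c hT h i hi
    obtain rfl : T = {i} := Finset.eq_singleton_iff_unique_mem.mpr
      ⟨hi, fun j hj => Finset.card_le_one.mp (by simpa using hT) j hj i hi⟩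
    simpa using h 0
  | succ d ih =>
    intro T c hT h i hi
    obtain ⟨S, hST, hS⟩ := Finset.exists_subset_card_eq (min_le_right s (T.erase i).card)
    have hiS : i ∉ S := fun h => by simpa using hST h
    obtain ⟨v, hvS, hvi⟩ := hL.exists_apply_eq_zero_apply_ne_zero hiS (hS ▸ min_le_left _ _)
    have hST' : S ⊆ T := hST.trans (Finset.erase_subset i T)
    have hrest : ∀ x, ∑ j ∈ T \ S, c j * L j v * L j x ^ d = 0 := fun x => by
      rw [← sum_mul_apply_mul_pow_eq_zero h v x]
      refine Finset.sum_subset Finset.sdiff_subset fun j hjT hj => ?_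
      rw [hvS j (by simpa [hjT] using hj), mul_zero, zero_mul]
    have hcard : (T \ S).card ≤ d * s + 1 := by
      rw [Finset.card_sdiff_of_subset hST', hS, Finset.card_erase_of_mem hi]
      have := Finset.card_pos.mpr ⟨i, hi⟩
      rw [add_one_mul] at hT
      omega
    exact (mul_eq_zero.mp (ih hcard hrest i (Finset.mem_sdiff.mpr ⟨hi, hiS⟩))).resolve_right hvi

theorem linearIndepOn_pow (hL : IsSeparating L s) {d : ℕ} {T : Finset ι}
    (hT : T.card ≤ d * s + 1) : LinearIndepOn K (fun i (x : V) => L i x ^ d) T := by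
  refine linearIndepOn_finset_iff.mpr fun c hc => hL.eq_zero_of_sum_mul_pow_eq_zero hT fun x => ?_
  simpa using congrFun hc x

theorem linearIndependent_pow [Fintype ι] (hL : IsSeparating L s) {d : ℕ}
    (h : Fintype.card ι ≤ d * s + 1) : LinearIndependent K fun i (x : V) => L i x ^ d := by
  rw [← linearIndepOn_univ_iff, ← Finset.coe_univ]
  exact hL.linearIndepOn_pow (by simpa using h)

theorem min_card_le_finrank_span_pow [Fintype ι] (hL : IsSeparating L s) (d : ℕ) :
    min (Fintype.card ι) (d * s + 1) ≤
      Module.finrank K (Submodule.span K (Set.range fun i (x : V) => L i x ^ d)) := by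
  obtain ⟨T, -, hT⟩ := Finset.exists_subset_card_eq (s := Finset.univ)
    (min_le_left (Fintype.card ι) (d * s + 1))
  have hli := (hL.linearIndepOn_pow (hT ▸ min_le_right _ _)).linearIndependent
  rw [linearIndependent_iff_card_le_finrank_span] at hli
  simp only [Finset.coe_sort_coe, Fintype.card_coe, hT] at hli
  have := FiniteDimensional.span_of_finite K (Set.finite_range fun i (x : V) => L i x ^ d)
  exact hli.trans (Submodule.finrank_mono (Submodule.span_mono
    (Set.range_comp_subset_range Subtype.val fun i (x : V) => L i x ^ d)))

end IsSeparating

end Separating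

theorem Submodule.finrank_le_finrank_inf_ker_add {K M M' : Type*} [Field K] [AddCommGroup M]
    [Module K M] [AddCommGroup M'] [Module K M'] [FiniteDimensional K M]
    (W : Submodule K M) (φ : M →ₗ[K] M') {U : Submodule K M'} [FiniteDimensional K U]
    (h : W.map φ ≤ U) :
    Module.finrank K W ≤ Module.finrank K ↥(W ⊓ LinearMap.ker φ) + Module.finrank K U := by
  have hker : LinearMap.ker (φ.domRestrict W) = (W ⊓ LinearMap.ker φ).comap W.subtype := by
    ext x
    simp
  have := (φ.domRestrict W).finrank_range_add_finrank_ker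
  rw [LinearMap.range_domRestrict, hker,
    (Submodule.comapSubtypeEquivOfLe inf_le_left).finrank_eq] at this
  have := Submodule.finrank_mono h
  omega

theorem finrank_ker_linearCombination {K M ι : Type*} [Field K] [AddCommGroup M] [Module K M]
    [Fintype ι] (v : ι → M) :
    Module.finrank K (LinearMap.ker (Fintype.linearCombination K v)) =
      Fintype.card ι - Module.finrank K (Submodule.span K (Set.range v)) := by
  have := (Fintype.linearCombination K v).finrank_range_add_finrank_ker
  rw [Fintype.range_linearCombination, Module.finrank_fintype_fun_eq_card] at this
  omega

section AbelianRelation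

variable {E ι κ : Type*} [NormedAddCommGroup E] [Fintype κ]

/-- An abelian relation of the web `(u i)`, given by primitives `g i` normalized by `g i 0 = 0`. -/
def IsAbelianRelation [Fintype ι] (u : ι → E → ℂ) (g : ι → ℂ → ℂ) : Prop :=
  (∀ i, AnalyticAt ℂ (g i) 0 ∧ g i 0 = 0) ∧ ∀ᶠ x in 𝓝 0, ∑ i, g i (u i x) = 0

theorem IsAbelianRelation.sum_mul [Fintype ι] {u : ι → E → ℂ} {r : κ → ι → ℂ → ℂ}
    (hr : ∀ m, IsAbelianRelation u (r m)) (c : κ → ℂ) :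
    IsAbelianRelation u fun i t => ∑ m, c m * r m i t := by
  refine ⟨fun i => ⟨Finset.analyticAt_fun_sum _ fun m _ => analyticAt_const.mul ((hr m).1 i).1,
    by simp [fun m => ((hr m).1 i).2]⟩, ?_⟩
  filter_upwards [eventually_all.mpr fun m => (hr m).2] with x hx
  rw [Finset.sum_comm]
  simp [← Finset.mul_sum, hx]

noncomputable def coeffMap (r : κ → ι → ℂ → ℂ) (j : ℕ) : (κ → ℂ) →ₗ[ℂ] ι → ℂ :=
  Matrix.mulVecLin (Matrix.of fun i m => taylorCoeff (r m i) j)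

theorem taylorCoeff_sum_mul_eq_coeffMap {r : κ → ι → ℂ → ℂ}
    (hr : ∀ m i, AnalyticAt ℂ (r m i) 0) (c : κ → ℂ) (i : ι) (j : ℕ) :
    taylorCoeff (fun t => ∑ m, c m * r m i t) j = coeffMap r j c i := by
  rw [taylorCoeff_sum_mul _ c fun m _ => hr m i]
  simp [coeffMap, Matrix.mulVec, dotProduct, mul_comm]

/-- The order filtration `F^j` of the paper, transported to coefficient vectors of relations. -/
noncomputable def orderFiltration (r : κ → ι → ℂ → ℂ) (j : ℕ) : Submodule ℂ (κ → ℂ) :=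
  ⨅ (e) (_ : e ≤ j), LinearMap.ker (coeffMap r e)

theorem mem_orderFiltration {r : κ → ι → ℂ → ℂ} {j : ℕ} {c : κ → ℂ} :
    c ∈ orderFiltration r j ↔ ∀ e ≤ j, coeffMap r e c = 0 := by
  simp [orderFiltration]

theorem orderFiltration_succ (r : κ → ι → ℂ → ℂ) (j : ℕ) :
    orderFiltration r (j + 1) = orderFiltration r j ⊓ LinearMap.ker (coeffMap r (j + 1)) := by
  ext c
  simp only [Submodule.mem_inf, mem_orderFiltration, LinearMap.mem_ker, Nat.le_succ_iff]
  grind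

theorem orderFiltration_zero {r : κ → ι → ℂ → ℂ} (hr0 : ∀ m i, r m i 0 = 0) :
    orderFiltration r 0 = ⊤ := by
  refine Submodule.eq_top_iff'.mpr fun c => mem_orderFiltration.mpr fun e he => ?_
  obtain rfl := Nat.le_zero.mp he
  ext i
  simp [coeffMap, Matrix.mulVec, dotProduct, taylorCoeff, hr0]

variable [NormedSpace ℂ E] [Fintype ι]

/-- `ℓ^j(W)` of the paper. -/
noncomputable def powRank (u : ι → E → ℂ) (j : ℕ) : ℕ :=
  Module.finrank ℂ (Submodule.span ℂ (Set.range fun i (v : E) => fderiv ℂ (u i) 0 v ^ j))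

variable {u : ι → E → ℂ} {r : κ → ι → ℂ → ℂ}

theorem sum_coeffMap_mul_fderiv_pow_eq_zero (hu : ∀ i, DifferentiableAt ℂ (u i) 0)
    (hu0 : ∀ i, u i 0 = 0) (hr : ∀ m, IsAbelianRelation u (r m)) {c : κ → ℂ} {e : ℕ}
    (hc : ∀ e' < e, coeffMap r e' c = 0) (v : E) :
    ∑ i, coeffMap r e c i * fderiv ℂ (u i) 0 v ^ e = 0 := by
  have han : ∀ m i, AnalyticAt ℂ (r m i) 0 := fun m i => ((hr m).1 i).1
  have hg := IsAbelianRelation.sum_mul hr c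
  simp_rw [← taylorCoeff_sum_mul_eq_coeffMap han]
  exact sum_taylorCoeff_mul_fderiv_pow_eq_zero hu hu0 (fun i => (hg.1 i).1) hg.2
    (fun i e' he' => (taylorCoeff_sum_mul_eq_coeffMap han c i e').trans (congrFun (hc e' he') i)) v

theorem finrank_orderFiltration_le (hu : ∀ i, DifferentiableAt ℂ (u i) 0)
    (hu0 : ∀ i, u i 0 = 0) (hr : ∀ m, IsAbelianRelation u (r m)) (j : ℕ) :
    Module.finrank ℂ (orderFiltration r j) ≤
      Module.finrank ℂ (orderFiltration r (j + 1)) + (Fintype.card ι - powRank u (j + 1)) := by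
  rw [orderFiltration_succ, powRank, ← finrank_ker_linearCombination]
  refine Submodule.finrank_le_finrank_inf_ker_add _ _ ?_
  rintro _ ⟨c, hc, rfl⟩
  rw [LinearMap.mem_ker, Fintype.linearCombination_apply]
  ext v
  simpa using sum_coeffMap_mul_fderiv_pow_eq_zero hu hu0 hr
    (fun e he => mem_orderFiltration.mp hc e (Nat.lt_succ_iff.mp he)) v

theorem card_le_finrank_orderFiltration_add (hu : ∀ i, DifferentiableAt ℂ (u i) 0)
    (hu0 : ∀ i, u i 0 = 0) (hr : ∀ m, IsAbelianRelation u (r m)) (d : ℕ) :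
    Fintype.card κ ≤ Module.finrank ℂ (orderFiltration r d) +
      ∑ j ∈ Finset.range d, (Fintype.card ι - powRank u (j + 1)) := by
  induction d with
  | zero =>
    rw [orderFiltration_zero fun m i => ((hr m).1 i).2, finrank_top,
      Module.finrank_fintype_fun_eq_card]
    simp
  | succ d ih =>
    rw [Finset.sum_range_succ]
    have := finrank_orderFiltration_le hu hu0 hr d
    omega

theorem orderFiltration_eq_bot (hu : ∀ i, DifferentiableAt ℂ (u i) 0)
    (hu0 : ∀ i, u i 0 = 0) (hr : ∀ m, IsAbelianRelation u (r m))
    (hindep : ∀ c : κ → ℂ, (∀ i, ∀ᶠ t in 𝓝 0, ∑ m, c m * r m i t = 0) → c = 0) {d : ℕ}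
    (hli : ∀ e, d < e → LinearIndependent ℂ fun i (v : E) => fderiv ℂ (u i) 0 v ^ e) :
    orderFiltration r d = ⊥ := by
  refine (Submodule.eq_bot_iff _).mpr fun c hc => hindep c fun i => ?_
  have hcoeff : ∀ e, coeffMap r e c = 0 := by
    intro e
    induction e using Nat.strong_induction_on with
    | _ e ih =>
      rcases le_or_gt e d with he | he
      · exact mem_orderFiltration.mp hc e he
      · refine funext (Fintype.linearIndependent_iff.mp (hli e he) _ ?_)
        ext v
        simpa using sum_coeffMap_mul_fderiv_pow_eq_zero hu hu0 hr ih v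
  have han : ∀ m i, AnalyticAt ℂ (r m i) 0 := fun m i => ((hr m).1 i).1
  refine ((IsAbelianRelation.sum_mul hr c).1 i).1.eventually_eq_zero_of_taylorCoeff fun e => ?_
  rw [taylorCoeff_sum_mul_eq_coeffMap han, hcoeff]
  rfl

end AbelianRelation

/-- (Bol–Chern bound)  Let `W` be a germ of quasi-smooth `k`-web on `(ℂⁿ,0)` given by
holomorphic submersions `u i` with pairwise non-proportional differentials at `0`.
Abelian relations are represented by their primitives: tuples `(g i)` of analytic germs
vanishing at `0` with `∑ i, g i ∘ u i = 0` near `0`.  Then the space of abelian relations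
has dimension at most `∑_{j=0}^{k-3} max (0, k - ℓ^{j+1}(W))`: any linearly independent
family of relations has at most that many members.  If moreover the web is smooth (the
differentials at `0` of any `m ≤ n` of the `u i` are linearly independent) and `n ≥ 2`,
then the rank is at most the Castelnuovo number
`π(n,k) = ∑_{j=0}^{k-3} max (0, k - (j+1)(n-1) - 1)`. -/
theorem stmt_8 (n k N : ℕ)
    (u : Fin k → ((Fin n → ℂ) → ℂ))
    (hu : ∀ i, AnalyticAt ℂ (u i) 0) (hu0 : ∀ i, u i 0 = 0)
    (hsub : ∀ i, fderiv ℂ (u i) 0 ≠ 0)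
    (hquasi : ∀ i i' : Fin k, i ≠ i' → ∀ c : ℂ,
      fderiv ℂ (u i) 0 ≠ c • fderiv ℂ (u i') 0)
    (r : Fin N → (Fin k → (ℂ → ℂ)))
    (hAR : ∀ m, (∀ i, AnalyticAt ℂ (r m i) 0 ∧ r m i 0 = 0) ∧
        ∀ᶠ x in nhds (0 : Fin n → ℂ), ∑ i, r m i (u i x) = 0)
    -- the family of abelian relations is linearly independent (as germs at the origin):
    (hindep : ∀ c : Fin N → ℂ,
        (∀ i, ∀ᶠ t in nhds (0 : ℂ), ∑ m, c m * r m i t = 0) → c = 0) :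
    N ≤ ∑ j ∈ Finset.range (k - 2),
        (k - Module.finrank ℂ ↥(Submodule.span ℂ (Set.range fun i : Fin k =>
            fun v : Fin n → ℂ => (fderiv ℂ (u i) 0 v) ^ (j + 1)))) ∧
    (2 ≤ n →
      (∀ I : Finset (Fin k), I.card ≤ n →
        LinearIndependent ℂ (fun i : I => fderiv ℂ (u i.1) 0)) →
      N ≤ ∑ j ∈ Finset.range (k - 2), (k - ((j + 1) * (n - 1) + 1))) := by
  have hdiff : ∀ i, DifferentiableAt ℂ (u i) 0 := fun i => (hu i).differentiableAt
  let L : Fin k → Module.Dual ℂ (Fin n → ℂ) := fun i => fderiv ℂ (u i) 0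
  have hL : Function.Injective fun A : (Fin n → ℂ) →L[ℂ] ℂ => (A : Module.Dual ℂ (Fin n → ℂ)) :=
    ContinuousLinearMap.coe_injective
  have hquasiL : IsSeparating L 1 :=
    IsSeparating.one_of_ne_smul (fun i h => hsub i (hL h))
      (fun i i' hii' c h => hquasi i i' hii' c (hL h))
  have hbot : orderFiltration r (k - 2) = ⊥ := by
    refine orderFiltration_eq_bot hdiff hu0 hAR hindep fun e he => ?_
    exact hquasiL.linearIndependent_pow (by rw [Fintype.card_fin]; omega)
  have hN := card_le_finrank_orderFiltration_add hdiff hu0 hAR (k - 2)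
  rw [hbot, finrank_bot, zero_add, Fintype.card_fin, Fintype.card_fin] at hN
  refine ⟨hN, fun hn hsmooth => hN.trans (Finset.sum_le_sum fun j _ => ?_)⟩
  have hsmoothL : IsSeparating L (n - 1) := IsSeparating.of_linearIndepOn fun I hI =>
    (hsmooth I (by omega)).map' (ContinuousLinearMap.coeLM ℂ) (LinearMap.ker_eq_bot.mpr hL)
  have h : min k ((j + 1) * (n - 1) + 1) ≤ powRank u (j + 1) := by
    have h := hsmoothL.min_card_le_finrank_span_pow (j + 1)
    rwa [Fintype.card_fin] at h
  change k - powRank u (j + 1) ≤ _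
  omega
end

section
/- With ρ = ⌊(k−n−1)/(n−1)⌋ and ε the remainder of the division of k−n−1 by n−1 (assuming k ≥ n+1), the Castelnuovo number admits the presentation π(n,k) = (ε+1)·C(ρ+2,2) + (n−2−ε)·C(ρ+1,2). -/
/-!
Write `k - n - 1 = ρ(n-1) + ε` and `m = n - 1`. The `j`-th summand is then `ρm + ε + 1 - jm`,
which vanishes for `j > ρ`; the surviving terms are `(ρ - j)m + (ε + 1)` for `j ≤ ρ`, summing to
`m·C(ρ+1,2) + (ε+1)(ρ+1)`. Pascal's rule `C(ρ+2,2) = C(ρ+1,2) + (ρ+1)` turns this into the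
stated presentation, with `m = (ε + 1) + (m - 1 - ε)`.
-/

open Finset

theorem sum_range_sub_mul_add (ρ m c : ℕ) :
    ∑ j ∈ range (ρ + 1), ((ρ - j) * m + c) = m * (ρ + 1).choose 2 + c * (ρ + 1) := by
  have hreflect : ∑ j ∈ range (ρ + 1), (ρ - j) = ∑ j ∈ range (ρ + 1), j := by
    simpa using sum_range_reflect (fun j => j) (ρ + 1)
  rw [sum_add_distrib, ← sum_mul, hreflect, sum_range_id, ← Nat.choose_two_right]
  simp [mul_comm]

theorem sum_range_sub_mul_of_le {ρ m c M : ℕ} (hcm : c ≤ m) (hM : ρ + 1 ≤ M) :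
    ∑ j ∈ range M, (ρ * m + c - j * m) = m * (ρ + 1).choose 2 + c * (ρ + 1) := by
  rw [← sum_range_sub_mul_add, ← sum_range_add_sum_Ico _ hM]
  have htail : ∑ j ∈ Ico (ρ + 1) M, (ρ * m + c - j * m) = 0 := by
    refine sum_eq_zero fun j hj => Nat.sub_eq_zero_of_le ?_
    have : (ρ + 1) * m ≤ j * m := Nat.mul_le_mul_right m (mem_Ico.1 hj).1
    linarith
  rw [htail, add_zero]
  refine sum_congr rfl fun j hj => ?_
  have hj : j ≤ ρ := Nat.lt_succ_iff.1 (mem_range.1 hj)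
  rw [Nat.sub_mul, Nat.sub_add_comm (Nat.mul_le_mul_right m hj)]

theorem mul_choose_two_add_eq {ρ m ε : ℕ} (hε : ε < m) :
    m * (ρ + 1).choose 2 + (ε + 1) * (ρ + 1)
      = (ε + 1) * (ρ + 2).choose 2 + (m - 1 - ε) * (ρ + 1).choose 2 := by
  obtain ⟨t, rfl⟩ : ∃ t, m = ε + 1 + t := ⟨m - 1 - ε, by omega⟩
  rw [Nat.choose_succ_succ' (ρ + 1), Nat.choose_one_right,
    show ε + 1 + t - 1 - ε = t by omega]
  ring

/-- Alternative closed formula for the Castelnuovo number.  For `k ≥ n+1`, let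
`ρ = ⌊(k-n-1)/(n-1)⌋` and `ε` be the remainder of the division of `k-n-1` by `n-1`.  Then
`π(n,k) = ∑_{j ≥ 1} max (0, k - j(n-1) - 1) = (ε+1)·C(ρ+2,2) + (n-2-ε)·C(ρ+1,2)`.
The infinite sum is expressed by truncating at any `M ≥ k` (all further terms vanish);
subtraction of naturals is truncated. -/
theorem stmt_10 (n k : ℕ) (hn : 2 ≤ n) (hk : n + 1 ≤ k) :
    ∀ M : ℕ, k ≤ M →
      (∑ j ∈ Finset.range M, (k - ((j + 1) * (n - 1) + 1)))
        = ((k - n - 1) % (n - 1) + 1) * Nat.choose ((k - n - 1) / (n - 1) + 2) 2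
          + (n - 2 - (k - n - 1) % (n - 1)) * Nat.choose ((k - n - 1) / (n - 1) + 1) 2 := by
  intro M hM
  set m := n - 1
  set ρ := (k - n - 1) / m
  set ε := (k - n - 1) % m
  have hε : ε < m := Nat.mod_lt _ (by omega)
  have hdiv : ρ * m + ε = k - n - 1 := by rw [mul_comm]; exact Nat.div_add_mod _ _
  have hterm (j : ℕ) : k - ((j + 1) * m + 1) = ρ * m + (ε + 1) - j * m := by
    rw [add_one_mul]; omega
  have hρ : ρ + 1 ≤ M := by have := Nat.div_le_self (k - n - 1) m; omega
  rw [sum_congr rfl fun j _ => hterm j, sum_range_sub_mul_of_le hε hρ,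
    mul_choose_two_add_eq hε, show n - 2 - ε = m - 1 - ε by omega]
end

section
/- (Castelnuovo Lemma) Let n ≥ 2 and k ≥ 2n+3. If P ⊂ ℙⁿ is a set of k points in general position that imposes only 2n+1 conditions on the linear system of quadrics, then P is contained in a rational normal curve of degree n. -/
/-- A subset `C` of `ℙⁿ = ℙ(ℂ^{n+1})` is a rational normal curve (of degree `n`) if it is
the image of an embedding `ℙ¹ → ℙⁿ` given by a basis of the degree-`n` binary forms,
i.e. a linear change of coordinates applied to the standard Veronese
`(s:t) ↦ [sⁿ : s^{n-1}t : … : tⁿ]`. -/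
def IsRationalNormalCurve (n : ℕ)
    (C : Set (Projectivization ℂ (Fin (n + 1) → ℂ))) : Prop :=
  ∃ M : (Fin (n + 1) → ℂ) ≃ₗ[ℂ] (Fin (n + 1) → ℂ),
    C = {x | ∃ s t c : ℂ, (s ≠ 0 ∨ t ≠ 0) ∧ c ≠ 0 ∧
      x.rep = c • M (fun i => s ^ (n - (i : ℕ)) * t ^ (i : ℕ))}

/-!
Write `v(p) = p pᵀ`. General position makes any `2n+1` of the matrices `v(p_i)` linearly
independent, while imposing `2n+1` conditions on quadrics bounds the dimension of their span
by `2n+1`. So for `2n+3` of the points `q_r` the relations `∑ λ_r v(q_r) = 0` form a space of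
dimension at least two in which a nonzero relation vanishes at one index at most; pick two
relations `λ, μ` without zero coefficients and with pairwise distinct ratios `t_r = μ_r / λ_r`.
The space `U` of value vectors `(ℓ(q_r))_r` of linear forms `ℓ` and its preimage under
`diag(t)` both lie in the `(n+2)`-dimensional kernel of `x ↦ ∑ μ_r x_r q_r`. This yields
linear forms `ℓ_0, …, ℓ_n` with `ℓ_j(q_r) = z_r t_r ^ j`: coordinates in which the `q_r` lie on
the standard Veronese curve. In these coordinates every `v(q_r)`, hence every `v(p_x)` (which
lies in their span), is a Hankel matrix, and a vector `y` with `y yᵀ` Hankel is a point of the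
Veronese curve.
-/

open Matrix Module Submodule Function

namespace Castelnuovo

section GeneralPosition

variable {K ι ι' V : Type*} [Field K] [AddCommGroup V] [Module K V]

variable (K) in
/-- For `s = dim V` this says that the points `[v i]` are in general position. -/
def LinearIndepUpTo (s : ℕ) (v : ι → V) : Prop :=
  ∀ I : Finset ι, I.card ≤ s → LinearIndepOn K v (I : Set ι)

variable {s : ℕ} {v : ι → V}

theorem LinearIndepUpTo.comp (hv : LinearIndepUpTo K s v) {g : ι' → ι} (hg : Injective g) :
    LinearIndepUpTo K s (v ∘ g) := fun I hI => by
  classical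
  refine LinearIndepOn.comp_of_image ?_ hg.injOn
  simpa using hv (I.image g) (Finset.card_image_le.trans hI)

theorem LinearIndepUpTo.exists_dual_eq_zero_ne_zero (hv : LinearIndepUpTo K (s + 1) v)
    {B : Finset ι} (hB : B.card ≤ s) {r : ι} (hr : r ∉ B) :
    ∃ f : Dual K V, (∀ i ∈ B, f (v i) = 0) ∧ f (v r) ≠ 0 := by
  classical
  have hins : LinearIndepOn K v (insert r (B : Set ι)) := by
    simpa using hv (insert r B) ((Finset.card_insert_le r B).trans (by omega))
  obtain ⟨f, hfr, hfB⟩ := exists_dual_map_eq_bot_of_notMem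
    ((linearIndepOn_insert (by simpa using hr)).1 hins).2 inferInstance
  refine ⟨f, fun i hi => ?_, hfr⟩
  exact (Submodule.eq_bot_iff _).1 hfB _ (mem_map_of_mem (subset_span ⟨i, hi, rfl⟩))

theorem LinearIndepUpTo.vecMulVec_self {d : ℕ} {p : ι → Fin d → K}
    (hp : LinearIndepUpTo K (s + 1) p) :
    LinearIndepUpTo K (2 * s + 1) (fun i => vecMulVec (p i) (p i)) := by
  classical
  intro I hI
  rw [linearIndepOn_finset_iff]
  intro c hc r hr
  obtain ⟨T, hT, hTcard⟩ := Finset.exists_subset_card_eq (min_le_right s (I.erase r).card)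
  have hrT : r ∉ T := fun h => Finset.notMem_erase r I (hT h)
  have hrS : r ∉ I.erase r \ T := fun h => Finset.notMem_erase r I (Finset.sdiff_subset h)
  obtain ⟨f, hfT, hfr⟩ := hp.exists_dual_eq_zero_ne_zero (hTcard ▸ min_le_left _ _) hrT
  obtain ⟨g, hgS, hgr⟩ := hp.exists_dual_eq_zero_ne_zero (B := I.erase r \ T) (by
    rw [Finset.card_sdiff_of_subset hT, hTcard, Finset.card_erase_of_mem hr]; omega) hrS
  -- test the relation against the product of the linear forms `f` and `g`
  set a := (dotProductEquiv K (Fin d)).symm f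
  set b := (dotProductEquiv K (Fin d)).symm g
  have hab : ∀ x, a ⬝ᵥ (vecMulVec x x *ᵥ b) = f x * g x := by
    intro x
    have hf : a ⬝ᵥ x = f x := LinearMap.congr_fun ((dotProductEquiv K _).apply_symm_apply f) x
    have hg : b ⬝ᵥ x = g x := LinearMap.congr_fun ((dotProductEquiv K _).apply_symm_apply g) x
    rw [vecMulVec_mulVec, op_smul_eq_smul, dotProduct_smul, smul_eq_mul, dotProduct_comm x b,
      hf, hg, mul_comm]
  have key := congrArg (fun A => a ⬝ᵥ (A *ᵥ b)) hc
  simp only [sum_mulVec, smul_mulVec, dotProduct_sum, dotProduct_smul, hab, smul_eq_mul,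
    zero_mulVec, dotProduct_zero] at key
  rw [Finset.sum_eq_single_of_mem r hr] at key
  · simpa [hfr, hgr] using key
  · intro i hi hir
    by_cases hiT : i ∈ T
    · simp [hfT i hiT]
    · simp [hgS i (Finset.mem_sdiff.2 ⟨Finset.mem_erase.2 ⟨hir, hi⟩, hiT⟩)]

theorem LinearIndepUpTo.eq_zero_of_dotProduct_eq_zero {d : ℕ} {q : ι → Fin d → K}
    (hq : LinearIndepUpTo K d q) {B : Finset ι} (hB : d ≤ B.card) {w : Fin d → K}
    (hw : ∀ i ∈ B, q i ⬝ᵥ w = 0) : w = 0 := by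
  obtain ⟨B', hB', hcard⟩ := Finset.exists_subset_card_eq hB
  let e : Fin d ≃ B' := (B'.equivFinOfCardEq hcard).symm
  have hunit : IsUnit (of fun i => q (e i)) :=
    linearIndependent_rows_iff_isUnit.1 ((hq B' hcard.le).comp e e.injective)
  refine mulVec_injective_iff_isUnit.2 hunit ?_
  ext i
  simpa [mulVec] using hw _ (hB' (e i).2)

theorem LinearIndepUpTo.eq_zero_of_sum_smul_eq_zero [Fintype ι] (hv : LinearIndepUpTo K s v)
    {c : ι → K} (hc : ∑ i, c i • v i = 0) {I : Finset ι} (hI : I.card ≤ s)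
    (hcI : ∀ i ∉ I, c i = 0) : c = 0 := by
  have hcI' : ∑ i ∈ I, c i • v i = 0 := by
    rw [← hc]
    exact Finset.sum_subset (Finset.subset_univ I) fun i _ hi => by rw [hcI i hi, zero_smul]
  funext i
  by_cases hi : i ∈ I
  · exact linearIndepOn_finset_iff.1 (hv I hI) c hcI' i hi
  · exact hcI i hi

theorem span_range_comp_eq [Fintype ι] [Fintype ι'] {N : ℕ}
    (hspan : finrank K (span K (Set.range v)) ≤ N) {g : ι' → ι} (hg : LinearIndepUpTo K N (v ∘ g))
    (hcard : N ≤ Fintype.card ι') : span K (Set.range (v ∘ g)) = span K (Set.range v) := by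
  have := FiniteDimensional.span_of_finite K (Set.finite_range v)
  have := FiniteDimensional.span_of_finite K (Set.finite_range (v ∘ g))
  obtain ⟨I, -, hI⟩ := Finset.exists_subset_card_eq (s := Finset.univ) (by simpa using hcard)
  have hN : N ≤ finrank K (span K (Set.range (v ∘ g))) := by
    have := finrank_span_eq_card (hg I hI.le)
    simp only [Finset.coe_sort_coe, Fintype.card_coe, hI] at this
    exact this ▸ finrank_mono (span_mono (Set.range_subset_iff.2 fun x => ⟨x, rfl⟩))
  exact eq_of_le_of_finrank_le (span_mono (Set.range_comp_subset_range g v)) (hspan.trans hN)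

end GeneralPosition

theorem exists_mem_forall_notMem {K V ι : Type*} [Field K] [Infinite K]
    [AddCommGroup V] [Module K V] [Finite ι] {Λ : Submodule K V} (P : ι → Submodule K V)
    (hP : ∀ i, ¬ Λ ≤ P i) : ∃ v ∈ Λ, ∀ i, v ∉ P i := by
  by_contra! h
  obtain ⟨i, hi⟩ := Subspace.exists_eq_top_of_iUnion_eq_univ (p := fun i => (P i).comap Λ.subtype)
    (Set.eq_univ_of_forall fun v => by simpa using h v v.2)
  exact hP i (comap_subtype_eq_top.1 hi)

section Relations

variable {K ι M : Type*} [Field K] [Fintype ι] [AddCommGroup M] [Module K M] {s : ℕ} {u : ι → M}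

theorem LinearIndepUpTo.eq_zero_of_sum_smul_eq_zero_of_eq_zero_of_eq_zero
    (hu : LinearIndepUpTo K s u) (hcard : Fintype.card ι = s + 2) {c : ι → K}
    (hc : ∑ i, c i • u i = 0) {a b : ι} (hab : a ≠ b) (ha : c a = 0) (hb : c b = 0) : c = 0 := by
  classical
  refine hu.eq_zero_of_sum_smul_eq_zero hc (I := (Finset.univ.erase a).erase b) ?_ fun i hi => ?_
  · rw [Finset.card_erase_of_mem (by simp [hab.symm]), Finset.card_erase_of_mem (by simp),
      Finset.card_univ, hcard]
    omega
  · obtain rfl | rfl : i = a ∨ i = b := by simp at hi; tauto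
    exacts [ha, hb]

theorem two_le_finrank_ker_linearCombination (hcard : Fintype.card ι = s + 2)
    (hspan : finrank K (span K (Set.range u)) ≤ s) :
    2 ≤ finrank K (LinearMap.ker (Fintype.linearCombination K u)) := by
  have := (Fintype.linearCombination K u).finrank_range_add_finrank_ker
  rw [Fintype.range_linearCombination, finrank_fintype_fun_eq_card, hcard] at this
  omega

theorem exists_two_relations_injective_div [Infinite K] (hu : LinearIndepUpTo K s u)
    (hcard : Fintype.card ι = s + 2) (hspan : finrank K (span K (Set.range u)) ≤ s) :
    ∃ l m : ι → K, ∑ i, l i • u i = 0 ∧ ∑ i, m i • u i = 0 ∧ (∀ i, l i ≠ 0) ∧ (∀ i, m i ≠ 0) ∧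
      Injective fun i => m i / l i := by
  classical
  set Λ := LinearMap.ker (Fintype.linearCombination K u)
  have hmem : ∀ c, c ∈ Λ ↔ ∑ i, c i • u i = 0 := fun c => by
    simp [Λ, Fintype.linearCombination_apply]
  have hΛ : 2 ≤ finrank K Λ := two_le_finrank_ker_linearCombination hcard hspan
  have hvanish : ∀ c ∈ Λ, ∀ a b, a ≠ b → c a = 0 → c b = 0 → c = 0 := fun c hc a b hab =>
    hu.eq_zero_of_sum_smul_eq_zero_of_eq_zero_of_eq_zero hcard ((hmem c).1 hc) hab
  have hlive : ∀ r, ¬ Λ ≤ LinearMap.ker (LinearMap.proj r) := by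
    intro r hr
    obtain ⟨b, hbr⟩ := Fintype.exists_ne_of_one_lt_card (by omega) r
    have hinj : Injective ((LinearMap.proj b : (ι → K) →ₗ[K] K) ∘ₗ Λ.subtype) := by
      rw [← LinearMap.ker_eq_bot, eq_bot_iff]
      intro c hc
      exact Subtype.ext (hvanish c c.2 b r hbr hc (hr c.2))
    have := LinearMap.finrank_le_finrank_of_injective hinj
    rw [finrank_self] at this
    omega
  obtain ⟨l, hl, hl0⟩ := exists_mem_forall_notMem _ hlive
  have hlm : ¬ Λ ≤ K ∙ l := fun h => by
    have := (finrank_mono h).trans (finrank_span_le_card {l})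
    simp at this
    omega
  obtain ⟨m, hm, hm0⟩ := exists_mem_forall_notMem
    (fun o : Option ι => o.elim (K ∙ l) fun r => LinearMap.ker (LinearMap.proj r))
    (by rintro (_ | r); exacts [hlm, hlive r])
  refine ⟨l, m, (hmem l).1 hl, (hmem m).1 hm, fun i => hl0 i, fun i => hm0 (some i), ?_⟩
  intro a b hab
  by_contra hne
  have hl0a : l a ≠ 0 := hl0 a
  have hl0b : l b ≠ 0 := hl0 b
  have hcomb := hvanish (m - (m a / l a) • l) (sub_mem hm (smul_mem _ _ hl)) a b hne
    (by simp [div_mul_cancel₀ _ hl0a])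
    (by simp [show m a / l a = m b / l b from hab, div_mul_cancel₀ _ hl0b])
  exact hm0 none (mem_span_singleton.2 ⟨m a / l a, (sub_eq_zero.1 hcomb).symm⟩)

end Relations

section IteratedComap

variable {K V : Type*} [Field K] [AddCommGroup V] [Module K V]
  (T : Module.End K V) (U : Submodule K V)

/-- `z ∈ iterInfComap T U j` iff `z, T z, …, T ^ j z ∈ U`. -/
def iterInfComap : ℕ → Submodule K V
  | 0 => U
  | j + 1 => iterInfComap j ⊓ (iterInfComap j).comap T

theorem iterInfComap_succ_le (j : ℕ) : iterInfComap T U (j + 1) ≤ iterInfComap T U j :=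
  inf_le_left

theorem iterInfComap_le (j : ℕ) : iterInfComap T U j ≤ U := by
  induction j with
  | zero => exact le_rfl
  | succ j ih => exact (iterInfComap_succ_le T U j).trans ih

theorem pow_apply_mem_of_mem_iterInfComap {j : ℕ} {z : V} (hz : z ∈ iterInfComap T U j)
    {i : ℕ} (hi : i ≤ j) : (T ^ i) z ∈ U := by
  induction j generalizing z i with
  | zero => obtain rfl := Nat.le_zero.1 hi; exact hz
  | succ j ih =>
    obtain ⟨hz, hTz⟩ := hz
    cases i with
    | zero => exact iterInfComap_le T U j hz
    | succ i => rw [pow_succ, Module.End.mul_apply]; exact ih hTz (by omega)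

variable [FiniteDimensional K V] {T}

theorem finrank_comap_of_injective (hT : Injective T) (N : Submodule K V) :
    finrank K (N.comap T) = finrank K N := by
  let e := LinearEquiv.ofInjectiveEndo T hT
  rw [show T = e from rfl, comap_equiv_eq_map_symm, LinearEquiv.finrank_map_eq]

theorem finrank_le_finrank_iterInfComap_add (hT : Injective T)
    (hU : finrank K ↥(U ⊔ U.comap T) ≤ finrank K U + 1) (j : ℕ) :
    finrank K U ≤ finrank K (iterInfComap T U j) + j := by
  -- the dimension drops along the chain are non-increasing, and the first one is at most one
  have hdrop : ∀ j, finrank K (iterInfComap T U j) ≤ finrank K (iterInfComap T U (j + 1)) + 1 := by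
    intro j
    induction j with
    | zero =>
      have := finrank_sup_add_finrank_inf_eq U (U.comap T)
      rw [finrank_comap_of_injective hT] at this
      change finrank K U ≤ finrank K ↥(U ⊓ U.comap T) + 1
      omega
    | succ j ih =>
      set C := iterInfComap T U
      have hsum := finrank_sup_add_finrank_inf_eq (C (j + 1)) ((C (j + 1)).comap T)
      have hle : C (j + 1) ⊔ (C (j + 1)).comap T ≤ (C j).comap T :=
        sup_le inf_le_right (comap_mono (iterInfComap_succ_le T U j))
      have := finrank_mono hle
      rw [finrank_comap_of_injective hT] at hsum this
      change _ ≤ finrank K ↥(C (j + 1) ⊓ (C (j + 1)).comap T) + 1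
      omega
  induction j with
  | zero => exact Nat.le_add_right _ _
  | succ j ih => have := hdrop j; omega

theorem exists_ne_zero_forall_pow_apply_mem (hT : Injective T) {d : ℕ}
    (hd : finrank K U = d + 1) (hU : finrank K ↥(U ⊔ U.comap T) ≤ d + 2) :
    ∃ z ≠ 0, ∀ i ≤ d, (T ^ i) z ∈ U := by
  have hpos := finrank_le_finrank_iterInfComap_add U hT (by omega) d
  obtain ⟨z, hz, hz0⟩ := Submodule.exists_mem_ne_zero_of_ne_bot
    (p := iterInfComap T U d) (fun h => by rw [h, finrank_bot] at hpos; omega)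
  exact ⟨z, hz0, fun i hi => pow_apply_mem_of_mem_iterInfComap T U hz hi⟩

end IteratedComap

section Quadrics

variable {K ι : Type*} [Field K] [Fintype ι]

theorem finrank_span_vecMulVec_self_le {d c : ℕ} (p : ι → Fin d → K)
    (hcond : finrank K ↥(MvPolynomial.homogeneousSubmodule (Fin d) K 2)
      = finrank K ↥((MvPolynomial.homogeneousSubmodule (Fin d) K 2) ⊓
          ⨅ i, LinearMap.ker (MvPolynomial.aeval (R := K) (p i)).toLinearMap) + c) :
    finrank K (span K (Set.range fun i => vecMulVec (p i) (p i))) ≤ c := by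
  classical
  set H := MvPolynomial.homogeneousSubmodule (Fin d) K 2
  set Z := ⨅ i, LinearMap.ker (MvPolynomial.aeval (R := K) (p i)).toLinearMap
  have : Module.Finite K H :=
    Module.Finite.iff_fg.2 (MvPolynomial.homogeneousSubmodule_fg (Fin d) K 2)
  let E : H →ₗ[K] ι → K := LinearMap.pi fun i => (MvPolynomial.aeval (p i)).toLinearMap ∘ₗ H.subtype
  have hker : LinearMap.ker E = Z.comap H.subtype := by
    ext f
    simp [E, Z, funext_iff, mem_iInf]
  have hkerE : finrank K (LinearMap.ker E) = finrank K ↥(H ⊓ Z) := by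
    rw [hker, ← map_comap_subtype]
    exact (equivMapOfInjective _ H.injective_subtype _).finrank_eq
  have hE : finrank K (LinearMap.range E) = c := by
    have := E.finrank_range_add_finrank_ker
    omega
  -- the quadric `∑ x_ab X_a X_b` takes the value `(A *ᵥ x) i` at `p i`
  let A : Matrix ι (Fin d × Fin d) K := of fun i ab => p i ab.1 * p i ab.2
  have hA : LinearMap.range A.mulVecLin ≤ LinearMap.range E := by
    rintro _ ⟨x, rfl⟩
    refine ⟨⟨∑ ab, x ab • (MvPolynomial.X ab.1 * MvPolynomial.X ab.2), ?_⟩, ?_⟩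
    · refine sum_mem fun ab _ => smul_mem _ _ ?_
      exact (MvPolynomial.isHomogeneous_X K ab.1).mul (MvPolynomial.isHomogeneous_X K ab.2)
    · ext i
      simp [E, A, mulVec, dotProduct, mul_comm]
  calc finrank K (span K (Set.range fun i => vecMulVec (p i) (p i)))
      = A.rank := by
        rw [rank_eq_finrank_span_row, ← LinearEquiv.finrank_map_eq (LinearEquiv.curry K K _ _),
          LinearMap.map_span, ← Set.range_comp]
        rfl
    _ ≤ c := hE ▸ finrank_mono hA

end Quadrics

section Veronese

variable {K : Type*} [Field K] {n : ℕ}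

def veronese (n : ℕ) (s t : K) : Fin (n + 1) → K := fun i => s ^ (n - (i : ℕ)) * t ^ (i : ℕ)

variable (K) in
def hankel (d : ℕ) : Submodule K (Matrix (Fin d) (Fin d) K) where
  carrier := {A | ∀ i j i' j' : Fin d, (i : ℕ) + j = i' + j' → A i j = A i' j'}
  add_mem' hA hB i j i' j' h := congrArg₂ (· + ·) (hA i j i' j' h) (hB i j i' j' h)
  zero_mem' _ _ _ _ _ := rfl
  smul_mem' c _ hA i j i' j' h := congrArg (c * ·) (hA i j i' j' h)

theorem vecMulVec_veronese_mem_hankel (s t : K) :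
    vecMulVec (veronese n s t) (veronese n s t) ∈ hankel K (n + 1) := by
  intro i j i' j' h
  have hi := i.is_le
  have hj := j.is_le
  have hi' := i'.is_le
  have hj' := j'.is_le
  have key : ∀ a b : ℕ, a ≤ n → b ≤ n →
      s ^ (n - a) * t ^ a * (s ^ (n - b) * t ^ b) = s ^ (2 * n - (a + b)) * t ^ (a + b) := by
    intro a b ha hb
    rw [show 2 * n - (a + b) = (n - a) + (n - b) by omega, pow_add, pow_add]
    ring
  simp only [vecMulVec_apply, veronese]
  rw [key _ _ hi hj, key _ _ hi' hj', h]

theorem exists_eq_smul_veronese_of_vecMulVec_mem_hankel {y : Fin (n + 1) → K} (hy : y ≠ 0)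
    (hH : vecMulVec y y ∈ hankel K (n + 1)) :
    ∃ s t c : K, (s ≠ 0 ∨ t ≠ 0) ∧ c ≠ 0 ∧ y = c • veronese n s t := by
  obtain _ | n := n
  · refine ⟨1, 0, y 0, Or.inl one_ne_zero, fun h => hy (funext fun i => ?_), funext fun i => ?_⟩
    · simpa [Fin.fin_one_eq_zero i] using h
    · simp [Fin.fin_one_eq_zero i, veronese]
  have hH' : ∀ i j i' j' : Fin (n + 2), (i : ℕ) + j = i' + j' → y i * y j = y i' * y j' := hH
  by_cases h0 : y 0 = 0
  · have hlow : ∀ i : Fin (n + 1), y i.castSucc = 0 := by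
      intro i
      induction i using Fin.induction with
      | zero => exact h0
      | succ i ih =>
        have := hH' i.succ.castSucc i.succ.castSucc i.castSucc.castSucc i.succ.succ
          (by simp; omega)
        rwa [ih, zero_mul, mul_self_eq_zero] at this
    have hlast : y (Fin.last _) ≠ 0 := fun hl => hy (funext fun i => by
      induction i using Fin.lastCases with
      | last => exact hl
      | cast i => exact hlow i)
    refine ⟨0, 1, y (Fin.last _), Or.inr one_ne_zero, hlast, funext fun i => ?_⟩
    induction i using Fin.lastCases with
    | last => simp [veronese]
    | cast i => simp [veronese, hlow i, zero_pow (Nat.sub_ne_zero_of_lt i.is_lt)]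
  · set τ := y 1 / y 0
    have hτ : y 1 = τ * y 0 := (div_mul_cancel₀ _ h0).symm
    refine ⟨1, τ, y 0, Or.inl one_ne_zero, h0, funext fun i => ?_⟩
    induction i using Fin.induction with
    | zero => simp [veronese]
    | succ i ih =>
      have := hH' i.succ 0 i.castSucc 1 (by simp)
      simp only [Pi.smul_apply, veronese, smul_eq_mul, one_pow, one_mul, Fin.val_succ,
        Fin.val_castSucc] at ih ⊢
      apply mul_right_cancel₀ h0
      rw [this, ih, hτ]
      ring

def veroneseImage (M : (Fin (n + 1) → K) ≃ₗ[K] (Fin (n + 1) → K)) :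
    Set (Projectivization K (Fin (n + 1) → K)) :=
  {x | ∃ s t c : K, (s ≠ 0 ∨ t ≠ 0) ∧ c ≠ 0 ∧ x.rep = c • M (veronese n s t)}

theorem mk_mem_veroneseImage (M : (Fin (n + 1) → K) ≃ₗ[K] (Fin (n + 1) → K))
    {v : Fin (n + 1) → K} (hv : v ≠ 0) {s t c : K} (hst : s ≠ 0 ∨ t ≠ 0) (hc : c ≠ 0)
    (h : v = c • M (veronese n s t)) : Projectivization.mk K v hv ∈ veroneseImage M := by
  obtain ⟨a, ha⟩ := (Projectivization.mk_eq_mk_iff K _ _ (Projectivization.rep_nonzero _) hv).1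
    (Projectivization.mk_rep (Projectivization.mk K v hv))
  exact ⟨s, t, a * c, hst, mul_ne_zero a.ne_zero hc, by rw [← ha, h, Units.smul_def, smul_smul]⟩

end Veronese

section NormalForm

variable {K ι : Type*} [Field K] [Fintype ι] {n : ℕ}

theorem transpose_mul_diagonal_mul [DecidableEq ι] {d : ℕ} (q : ι → Fin d → K) (c : ι → K) :
    (of q)ᵀ * diagonal c * of q = ∑ r, c r • vecMulVec (q r) (q r) := by
  ext i j
  simp [mul_apply, diagonal, vecMulVec, Matrix.sum_apply, mul_comm, mul_left_comm]

theorem linearIndependent_of_dotProduct_eq_pow_mul {q : ι → Fin (n + 1) → K}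
    (hq : LinearIndepUpTo K (n + 1) q) (hcard : 2 * n + 1 ≤ Fintype.card ι) {t z : ι → K}
    (ht : Injective t) (hz : z ≠ 0) {w : Fin (n + 1) → Fin (n + 1) → K}
    (hw : ∀ j r, q r ⬝ᵥ w j = t r ^ (j : ℕ) * z r) : LinearIndependent K w := by
  classical
  have hzeros : (Finset.univ.filter fun r => z r = 0).card ≤ n := by
    by_contra! h
    refine hz (funext fun r => ?_)
    have hw0 : w 0 = 0 := hq.eq_zero_of_dotProduct_eq_zero h fun r hr => by
      simpa [hw] using (Finset.mem_filter.1 hr).2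
    simpa [hw0] using (hw 0 r).symm
  obtain ⟨N, hN, hNcard⟩ := Finset.exists_subset_card_eq (s := Finset.univ.filter fun r => z r ≠ 0)
    (n := n + 1) (by
      have := Finset.card_filter_add_card_filter_not (s := Finset.univ) fun r => z r = 0
      simp only [Finset.card_univ, ← ne_eq] at this
      omega)
  let e : Fin (n + 1) ≃ N := (N.equivFinOfCardEq hNcard).symm
  rw [Fintype.linearIndependent_iff]
  intro c hc
  refine funext_iff.1 <| eq_zero_of_forall_index_sum_mul_pow_eq_zero (f := fun l => t (e l))
    (fun a b hab => e.injective (Subtype.ext (ht hab))) fun l => ?_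
  have hzl : z (e l) ≠ 0 := (Finset.mem_filter.1 (hN (e l).2)).2
  have := congrArg (q (e l) ⬝ᵥ ·) hc
  simp only [dotProduct_sum, dotProduct_smul, hw, dotProduct_zero, smul_eq_mul, ← mul_assoc,
    ← Finset.sum_mul] at this
  exact (mul_eq_zero.1 this).resolve_right hzl

theorem mulVecLin_diagonal_pow_apply [DecidableEq ι] (t z : ι → K) (j : ℕ) :
    ((diagonal t).mulVecLin ^ j) z = fun r => t r ^ j * z r := by
  induction j with
  | zero => simp
  | succ j ih => ext r; simp [pow_succ', ih, mulVec_diagonal, mul_assoc]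

theorem finrank_ker_mulVecLin_transpose_mul_diagonal_add [DecidableEq ι] {d : ℕ}
    {q : ι → Fin d → K} (hq : Injective (of q).mulVecLin) {m : ι → K} (hm : ∀ r, m r ≠ 0) :
    finrank K (LinearMap.ker ((of q)ᵀ * diagonal m).mulVecLin) + d = Fintype.card ι := by
  have hrank : ((of q)ᵀ * diagonal m).rank = d := by
    rw [rank_mul_eq_left_of_isUnit_det _ _ ((isUnit_diagonal.2 (Pi.isUnit_iff.2
      fun r => (hm r).isUnit)).map detMonoidHom), rank_transpose, Matrix.rank,
      LinearMap.finrank_range_of_inj hq, finrank_fin_fun]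
  have := ((of q)ᵀ * diagonal m).mulVecLin.finrank_range_add_finrank_ker
  rw [finrank_fintype_fun_eq_card, ← Matrix.rank, hrank] at this
  omega

theorem range_sup_comap_le_ker_mulVecLin_transpose_mul_diagonal [DecidableEq ι] {d : ℕ}
    {q : ι → Fin d → K} {l m : ι → K} (hl : ∑ r, l r • vecMulVec (q r) (q r) = 0)
    (hm : ∑ r, m r • vecMulVec (q r) (q r) = 0) (hl0 : ∀ r, l r ≠ 0) :
    LinearMap.range (of q).mulVecLin ⊔
        (LinearMap.range (of q).mulVecLin).comap (diagonal fun r => m r / l r).mulVecLin ≤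
      LinearMap.ker ((of q)ᵀ * diagonal m).mulVecLin := by
  have hml : (of q)ᵀ * diagonal m = (of q)ᵀ * diagonal l * diagonal fun r => m r / l r := by
    rw [Matrix.mul_assoc, diagonal_mul_diagonal]
    congr 2
    ext r
    rw [mul_div_cancel₀ _ (hl0 r)]
  refine sup_le ?_ ?_
  · rintro _ ⟨v, rfl⟩
    change ((of q)ᵀ * diagonal m) *ᵥ (of q *ᵥ v) = 0
    rw [mulVec_mulVec, transpose_mul_diagonal_mul, hm, zero_mulVec]
  · rintro y ⟨v, hv⟩
    change of q *ᵥ v = (diagonal fun r => m r / l r) *ᵥ y at hv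
    change ((of q)ᵀ * diagonal m) *ᵥ y = 0
    rw [hml, ← mulVec_mulVec, ← hv, mulVec_mulVec, transpose_mul_diagonal_mul, hl, zero_mulVec]

theorem exists_isUnit_mulVec_eq_smul_veronese [Infinite K] [DecidableEq ι]
    {q : ι → Fin (n + 1) → K} (hq : LinearIndepUpTo K (n + 1) q)
    (hcard : Fintype.card ι = 2 * n + 3)
    (hspan : finrank K (span K (Set.range fun r => vecMulVec (q r) (q r))) ≤ 2 * n + 1) :
    ∃ W : Matrix (Fin (n + 1)) (Fin (n + 1)) K, IsUnit W ∧
      ∃ z t : ι → K, ∀ r, W *ᵥ q r = z r • veronese n 1 (t r) := by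
  obtain ⟨l, m, hl, hm, hl0, hm0, ht⟩ :=
    exists_two_relations_injective_div hq.vecMulVec_self hcard hspan
  set t := fun r => m r / l r
  have hQ : Injective (of q).mulVecLin := by
    rw [← LinearMap.ker_eq_bot, eq_bot_iff]
    exact fun v hv => hq.eq_zero_of_dotProduct_eq_zero (B := Finset.univ)
      (by simp [hcard]; omega) fun r _ => congrFun hv r
  have hU : finrank K (LinearMap.range (of q).mulVecLin) = n + 1 := by
    rw [LinearMap.finrank_range_of_inj hQ, finrank_fin_fun]
  have hT : Injective (diagonal t).mulVecLin := mulVec_injective_iff_isUnit.2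
    (isUnit_diagonal.2 (Pi.isUnit_iff.2 fun r => (div_ne_zero (hm0 r) (hl0 r)).isUnit))
  have hker := finrank_ker_mulVecLin_transpose_mul_diagonal_add hQ hm0
  have hle := range_sup_comap_le_ker_mulVecLin_transpose_mul_diagonal hl hm hl0
  obtain ⟨z, hz0, hz⟩ := exists_ne_zero_forall_pow_apply_mem _ hT hU
    ((finrank_mono hle).trans (by omega))
  choose w hw using fun j : Fin (n + 1) => hz j (Nat.lt_succ_iff.1 j.2)
  have hw' : ∀ j r, q r ⬝ᵥ w j = t r ^ (j : ℕ) * z r := fun j r => by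
    simpa [mulVecLin_diagonal_pow_apply, mulVec] using congrFun (hw j) r
  refine ⟨of w, linearIndependent_rows_iff_isUnit.1 ?_, z, t, fun r => ?_⟩
  · exact linearIndependent_of_dotProduct_eq_pow_mul hq (by omega) ht hz0 hw'
  · ext j
    simp [mulVec, veronese, dotProduct_comm (w j), hw', mul_comm]

end NormalForm

theorem mul_vecMulVec_mul_transpose {K : Type*} [Field K] {d : ℕ} (W : Matrix (Fin d) (Fin d) K)
    (v : Fin d → K) : W * vecMulVec v v * Wᵀ = vecMulVec (W *ᵥ v) (W *ᵥ v) := by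
  rw [mul_vecMulVec, vecMulVec_mul, vecMul_transpose]

theorem exists_isUnit_forall_mulVec_eq_smul_veronese {K ι : Type*} [Field K] [Infinite K]
    [Fintype ι] {n : ℕ} {p : ι → Fin (n + 1) → K} (hp : LinearIndepUpTo K (n + 1) p)
    (hcard : 2 * n + 3 ≤ Fintype.card ι)
    (hspan : finrank K (span K (Set.range fun i => vecMulVec (p i) (p i))) ≤ 2 * n + 1) :
    ∃ W : Matrix (Fin (n + 1)) (Fin (n + 1)) K, IsUnit W ∧ ∀ x, p x ≠ 0 →
      ∃ s t c : K, (s ≠ 0 ∨ t ≠ 0) ∧ c ≠ 0 ∧ W *ᵥ p x = c • veronese n s t := by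
  obtain ⟨g⟩ := Function.Embedding.nonempty_of_card_le (α := Fin (2 * n + 3)) (β := ι)
    (by simpa using hcard)
  have hS := span_range_comp_eq hspan (hp.vecMulVec_self.comp g.injective) (by simp)
  obtain ⟨W, hW, z, t, hWq⟩ := exists_isUnit_mulVec_eq_smul_veronese (hp.comp g.injective)
    (by simp) (hS ▸ hspan)
  refine ⟨W, hW, fun x hx => exists_eq_smul_veronese_of_vecMulVec_mem_hankel ?_ ?_⟩
  · exact fun h => hx (mulVec_injective_iff_isUnit.2 hW (h.trans (mulVec_zero W).symm))
  · rw [← mul_vecMulVec_mul_transpose, Matrix.mul_assoc]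
    have hx : vecMulVec (p x) (p x) ∈
        span K (Set.range ((fun i => vecMulVec (p i) (p i)) ∘ g)) := hS ▸ subset_span ⟨x, rfl⟩
    let conj := LinearMap.mulLeft K W ∘ₗ LinearMap.mulRight K Wᵀ
    refine (span_le.2 ?_ : span K _ ≤ (hankel K (n + 1)).comap conj) hx
    rintro _ ⟨r, rfl⟩
    change W * (vecMulVec (p (g r)) (p (g r)) * Wᵀ) ∈ hankel K (n + 1)
    rw [← Matrix.mul_assoc, mul_vecMulVec_mul_transpose, show W *ᵥ p (g r) = _ from hWq r,
      smul_vecMulVec, vecMulVec_smul]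
    exact smul_mem _ _ (smul_mem _ _ (vecMulVec_veronese_mem_hankel _ _))

end Castelnuovo

open Castelnuovo

theorem stmt_13_general (n k : ℕ) (hk : 2 * n + 3 ≤ k)
    (p : Fin k → (Fin (n + 1) → ℂ)) (hp : ∀ i, p i ≠ 0)
    (hgen : ∀ I : Finset (Fin k), I.card ≤ n + 1 →
      LinearIndependent ℂ (fun i : I => p i.1))
    (hcond : Module.finrank ℂ ↥(MvPolynomial.homogeneousSubmodule (Fin (n + 1)) ℂ 2)
      = Module.finrank ℂ ↥((MvPolynomial.homogeneousSubmodule (Fin (n + 1)) ℂ 2) ⊓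
          ⨅ i : Fin k, LinearMap.ker (MvPolynomial.aeval (R := ℂ) (p i)).toLinearMap)
        + (2 * n + 1)) :
    ∃ C : Set (Projectivization ℂ (Fin (n + 1) → ℂ)),
      IsRationalNormalCurve n C ∧ ∀ i, Projectivization.mk ℂ (p i) (hp i) ∈ C := by
  obtain ⟨W, hW, hWp⟩ := exists_isUnit_forall_mulVec_eq_smul_veronese (p := p) hgen
    (by simpa using hk) (finrank_span_vecMulVec_self_le p hcond)
  let e := W.toLinearEquiv' hW.invertible
  refine ⟨veroneseImage e.symm, ⟨e.symm, rfl⟩, fun i => ?_⟩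
  obtain ⟨s, t, c, hst, hc, h⟩ := hWp i (hp i)
  refine mk_mem_veroneseImage e.symm (hp i) hst hc ?_
  rw [← map_smul, ← h]
  exact (e.symm_apply_apply (p i)).symm

/-- (Castelnuovo Lemma)  Let `n ≥ 2` and `k ≥ 2n+3`.  If `P = {[p 1], …, [p k]} ⊆ ℙⁿ` is a
set of `k` points in general position (any `n+1` of them linearly independent) imposing
only `2n+1` conditions on the linear system of quadrics — i.e. the subspace of quadrics
vanishing on `P` has codimension `2n+1` in the space of all quadrics — then `P` is
contained in a rational normal curve of degree `n`. -/
theorem stmt_13 (n k : ℕ) (hn : 2 ≤ n) (hk : 2 * n + 3 ≤ k)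
    (p : Fin k → (Fin (n + 1) → ℂ)) (hp : ∀ i, p i ≠ 0)
    (hgen : ∀ I : Finset (Fin k), I.card ≤ n + 1 →
      LinearIndependent ℂ (fun i : I => p i.1))
    (hcond : Module.finrank ℂ ↥(MvPolynomial.homogeneousSubmodule (Fin (n + 1)) ℂ 2)
      = Module.finrank ℂ ↥((MvPolynomial.homogeneousSubmodule (Fin (n + 1)) ℂ 2) ⊓
          ⨅ i : Fin k, LinearMap.ker (MvPolynomial.aeval (R := ℂ) (p i)).toLinearMap)
        + (2 * n + 1)) :
    ∃ C : Set (Projectivization ℂ (Fin (n + 1) → ℂ)),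
      IsRationalNormalCurve n C ∧ ∀ i, Projectivization.mk ℂ (p i) (hp i) ∈ C :=
  stmt_13_general n k hk p hp hgen hcond
end

section
/- (Tait–Kneser variant) Let f be a real polynomial and n an even integer with n < deg f. For a < b real, let g_t(x) = Σ_{i=0}^n f^{(i)}(t)(x−t)^i / i! be the n-th osculating polynomial of f at t. If f^{(n+1)}(t) ≠ 0 for all t ∈ (a,b), then the graphs of g_a and g_b do not intersect in ℝ²; that is, g_a(x) ≠ g_b(x) for all real x. -/
/-! Moving the centre `t` of the osculating polynomial changes its value at a fixed `x` at rate
`∂ₜ g_t(x) = f⁽ⁿ⁺¹⁾(t) (x - t)ⁿ / n!`, since the sum telescopes. For even `n` this has the constant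
sign of `f⁽ⁿ⁺¹⁾` on `(a, b)` and vanishes there at most at `t = x`, so `t ↦ g_t(x)` is strictly
monotone on `[a, b]`. -/

open Set Polynomial
open scoped Nat

theorem IsPreconnected.forall_pos_or_forall_neg {α β : Type*} [TopologicalSpace α]
    [LinearOrder β] [TopologicalSpace β] [OrderClosedTopology β] [Zero β] {s : Set α}
    {f : α → β} (hs : IsPreconnected s) (hf : ContinuousOn f s) (h0 : ∀ x ∈ s, f x ≠ 0) :
    (∀ x ∈ s, 0 < f x) ∨ ∀ x ∈ s, f x < 0 := by
  by_contra! h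
  obtain ⟨⟨x, hx, hfx⟩, y, hy, hfy⟩ := h
  obtain ⟨z, hz, hfz⟩ := hs.intermediate_value hx hy hf ⟨hfx, hfy⟩
  exact h0 z hz hfz

theorem lt_of_hasDerivAt_nonneg_of_ne_zero {g g' : ℝ → ℝ} {a b c : ℝ} (hab : a < b)
    (hcont : ContinuousOn g (Icc a b)) (hderiv : ∀ t ∈ Ioo a b, HasDerivAt g (g' t) t)
    (hnonneg : ∀ t ∈ Ioo a b, 0 ≤ g' t) (hne : ∀ t ∈ Ioo a b, t ≠ c → g' t ≠ 0) :
    g a < g b := by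
  have hmono : MonotoneOn g (Icc a b) := by
    refine monotoneOn_of_hasDerivWithinAt_nonneg (f' := g') (convex_Icc a b) hcont ?_ ?_ <;>
      rw [interior_Icc]
    exacts [fun t ht => (hderiv t ht).hasDerivWithinAt, hnonneg]
  have hab' := left_mem_Icc.2 hab.le
  have hba' := right_mem_Icc.2 hab.le
  refine (hmono hab' hba' hab.le).lt_of_ne fun heq => ?_
  have hconst : ∀ s ∈ Ioo a b, g s = g a := fun s hs =>
    le_antisymm (heq ▸ hmono (Ioo_subset_Icc_self hs) hba' hs.2.le)
      (hmono hab' (Ioo_subset_Icc_self hs) hs.1.le)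
  obtain ⟨t, ht, htc⟩ := (Ioo_infinite hab).nontrivial.exists_ne c
  have hzero : HasDerivAt g 0 t := (hasDerivAt_const t (g a)).congr_of_eventuallyEq <|
    Filter.eventually_of_mem (Ioo_mem_nhds ht.1 ht.2) hconst
  exact hne t ht htc ((hderiv t ht).unique hzero)

namespace Polynomial

variable {𝕜 : Type*} [NontriviallyNormedField 𝕜]

noncomputable def osculating (f : 𝕜[X]) (n : ℕ) (t x : 𝕜) : 𝕜 :=
  ∑ i ∈ Finset.range (n + 1), (derivative^[i] f).eval t * (x - t) ^ i / i !

theorem osculating_neg (f : 𝕜[X]) (n : ℕ) (t x : 𝕜) :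
    (-f).osculating n t x = -f.osculating n t x := by
  simp only [osculating, iterate_derivative_neg, eval_neg, neg_mul, neg_div,
    Finset.sum_neg_distrib]

theorem hasDerivAt_osculating_center [CharZero 𝕜] (f : 𝕜[X]) (n : ℕ) (t x : 𝕜) :
    HasDerivAt (fun s => f.osculating n s x)
      ((derivative^[n + 1] f).eval t * (x - t) ^ n / n !) t := by
  induction n with
  | zero => simpa [osculating] using f.hasDerivAt t
  | succ n ih =>
    have hp : HasDerivAt (fun s => (derivative^[n + 1] f).eval s)
        ((derivative^[n + 2] f).eval t) t := by
      simpa only [← Function.iterate_succ_apply' derivative] using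
        (derivative^[n + 1] f).hasDerivAt t
    have hq := ((hasDerivAt_id t).const_sub x).pow (n + 1)
    have hsplit : (fun s => f.osculating (n + 1) s x) = fun s => f.osculating n s x +
        (derivative^[n + 1] f).eval s * (x - s) ^ (n + 1) / (n + 1)! := by
      ext s; exact Finset.sum_range_succ _ _
    rw [hsplit]
    refine (ih.add ((hp.mul hq).div_const _)).congr_deriv ?_
    simp only [id, Pi.pow_apply, Nat.factorial_succ, Nat.cast_mul, Nat.cast_succ,
      Nat.add_sub_cancel]
    field_simp
    ring

theorem osculating_lt_osculating_of_pos {f : ℝ[X]} {n : ℕ} (hn : Even n) {a b : ℝ} (hab : a < b)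
    (hf : ∀ t ∈ Ioo a b, 0 < (derivative^[n + 1] f).eval t) (x : ℝ) :
    f.osculating n a x < f.osculating n b x := by
  have hderiv t := f.hasDerivAt_osculating_center n t x
  refine lt_of_hasDerivAt_nonneg_of_ne_zero (c := x) hab
    (fun t _ => (hderiv t).continuousAt.continuousWithinAt) (fun t _ => hderiv t)
    (fun t ht => div_nonneg (mul_nonneg (hf t ht).le (hn.pow_nonneg _)) (by positivity))
    fun t ht htx => ?_
  have hxt : x - t ≠ 0 := sub_ne_zero.2 (Ne.symm htx)
  have := (hf t ht).ne'
  positivity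

end Polynomial

theorem stmt_16_general (f : Polynomial ℝ) (n : ℕ) (hn : Even n)
    (a b : ℝ) (hab : a < b)
    (hf : ∀ t ∈ Set.Ioo a b,
      ((fun q : Polynomial ℝ => Polynomial.derivative q)^[n + 1] f).eval t ≠ 0) :
    ∀ x : ℝ,
      (∑ i ∈ Finset.range (n + 1),
        ((fun q : Polynomial ℝ => Polynomial.derivative q)^[i] f).eval a
          * (x - a) ^ i / (Nat.factorial i : ℝ))
      ≠ (∑ i ∈ Finset.range (n + 1),
        ((fun q : Polynomial ℝ => Polynomial.derivative q)^[i] f).eval b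
          * (x - b) ^ i / (Nat.factorial i : ℝ)) := by
  intro x
  change f.osculating n a x ≠ f.osculating n b x
  rcases isPreconnected_Ioo.forall_pos_or_forall_neg (derivative^[n + 1] f).continuousOn hf with
    hpos | hneg
  · exact (osculating_lt_osculating_of_pos hn hab hpos x).ne
  · have hpos : ∀ t ∈ Ioo a b, 0 < (derivative^[n + 1] (-f)).eval t := fun t ht => by
      simpa only [iterate_derivative_neg, eval_neg, neg_pos] using hneg t ht
    have := osculating_lt_osculating_of_pos hn hab hpos x
    rw [osculating_neg, osculating_neg, neg_lt_neg_iff] at this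
    exact this.ne'

/-- (Tait–Kneser variant)  Let `f` be a real polynomial and `n` an even integer with
`n < deg f`.  For `t` real, let `g_t(x) = ∑_{i=0}^n f^{(i)}(t)(x-t)^i / i!` be the `n`-th
osculating polynomial of `f` at `t`.  If `f^{(n+1)}(t) ≠ 0` for all `t ∈ (a,b)`, then the
graphs of `g_a` and `g_b` do not intersect in `ℝ²`: `g_a(x) ≠ g_b(x)` for all real `x`. -/
theorem stmt_16 (f : Polynomial ℝ) (n : ℕ) (hn : Even n) (hdeg : n < f.natDegree)
    (a b : ℝ) (hab : a < b)
    (hf : ∀ t ∈ Set.Ioo a b,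
      ((fun q : Polynomial ℝ => Polynomial.derivative q)^[n + 1] f).eval t ≠ 0) :
    ∀ x : ℝ,
      (∑ i ∈ Finset.range (n + 1),
        ((fun q : Polynomial ℝ => Polynomial.derivative q)^[i] f).eval a
          * (x - a) ^ i / (Nat.factorial i : ℝ))
      ≠ (∑ i ∈ Finset.range (n + 1),
        ((fun q : Polynomial ℝ => Polynomial.derivative q)^[i] f).eval b
          * (x - b) ^ i / (Nat.factorial i : ℝ)) :=
  stmt_16_general f n hn a b hab hf
end
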